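/- arXiv:2306.08623 — 9 statements merged into one kernel-verified Lean document; each statement's English description precedes it below -/
import Mathlib

section
/- For every real number ℓ ≥ 0 and every finite set P of r-cliques of G, let S_ℓ denote the set of r-cliques of G that are not in P and whose (r,s)-clique core number is at most ℓ. Then the number of s-cliques of G that are residual with respect to P and contain at least one member of S_ℓ is at most ℓ · |S_ℓ|. -/
open Finset

variable {V : Type*}

/-- The `(r,s)`-clique core number of an `r`-clique `R` in `G`: the largest `c ≥ 1` for which
there is a set `𝒮` of `s`-cliques of `G` such that `R` is contained in at least one member of
`𝒮` and every `r`-clique contained in any member of `𝒮` is contained in at least `c` members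
of `𝒮`; `0` if no such `c` exists. -/
noncomputable def coreNumber [Fintype V] [DecidableEq V] (G : SimpleGraph V)
    [DecidableRel G.Adj] (r s : ℕ) (R : Finset V) : ℕ :=
  sSup {c : ℕ | 1 ≤ c ∧ ∃ 𝒮 : Finset (Finset V),
    (∀ S ∈ 𝒮, S ∈ G.cliqueFinset s) ∧ (∃ S ∈ 𝒮, R ⊆ S) ∧
    ∀ R' ∈ G.cliqueFinset r, (∃ S ∈ 𝒮, R' ⊆ S) →
      c ≤ (𝒮.filter (fun S => R' ⊆ S)).card}

/-!
Peeling. As long as some residual `s`-clique contains a low `r`-clique (one of core number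
at most `ℓ`), some low `r`-clique `R` lies in at most `ℓ` of these `s`-cliques: otherwise,
with `c = ⌊ℓ⌋ + 1`, the residual `s`-cliques together with the largest family witnessing core
number `c` would witness core number `c > ℓ` for a low `r`-clique. Adding `R` to `P` removes
one low `r`-clique and at most `ℓ` of the counted `s`-cliques, so induction on the number of
low `r`-cliques concludes.
-/

section CoreFamily

variable [Fintype V] [DecidableEq V] (G : SimpleGraph V) [DecidableRel G.Adj] (r s : ℕ)

def IsCoreFamily (c : ℕ) (𝒮 : Finset (Finset V)) : Prop :=
  (∀ S ∈ 𝒮, S ∈ G.cliqueFinset s) ∧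
    ∀ R ∈ G.cliqueFinset r, (∃ S ∈ 𝒮, R ⊆ S) → c ≤ #{S ∈ 𝒮 | R ⊆ S}

variable {G r s}

lemma IsCoreFamily.of_le {c c' : ℕ} {𝒮 : Finset (Finset V)} (h : IsCoreFamily G r s c' 𝒮)
    (hc : c ≤ c') : IsCoreFamily G r s c 𝒮 :=
  ⟨h.1, fun R hR hcov => hc.trans (h.2 R hR hcov)⟩

variable (G r s) in
lemma exists_isCoreFamily_forall_subset (c : ℕ) :
    ∃ 𝒦, IsCoreFamily G r s c 𝒦 ∧ ∀ 𝒮, IsCoreFamily G r s c 𝒮 → 𝒮 ⊆ 𝒦 := by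
  classical
  let F := {𝒮 ∈ (G.cliqueFinset s).powerset | IsCoreFamily G r s c 𝒮}
  refine ⟨F.sup id, ⟨?_, ?_⟩, fun 𝒮 h𝒮 => le_sup (f := id) (mem_filter.2
    ⟨mem_powerset.2 fun S hS => h𝒮.1 S hS, h𝒮⟩)⟩
  · intro S hS
    obtain ⟨𝒮, h𝒮, hS⟩ := mem_sup.1 hS
    exact (mem_filter.1 h𝒮).2.1 S hS
  · rintro R hR ⟨S, hS, hRS⟩
    obtain ⟨𝒮, h𝒮, hS⟩ := mem_sup.1 hS
    exact ((mem_filter.1 h𝒮).2.2 R hR ⟨S, hS, hRS⟩).trans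
      (card_le_card (filter_subset_filter _ (le_sup (f := id) h𝒮)))

lemma le_coreNumber_iff {R : Finset V} (hR : R ∈ G.cliqueFinset r) {c : ℕ} (hc : 1 ≤ c) :
    c ≤ coreNumber G r s R ↔ ∃ 𝒮, IsCoreFamily G r s c 𝒮 ∧ ∃ S ∈ 𝒮, R ⊆ S := by
  constructor
  · intro h
    obtain ⟨c', ⟨-, 𝒮, hcl, hcov, hdeg⟩, hc'⟩ :=
      exists_lt_of_lt_csSup' (Nat.sub_one_lt_of_le hc h)
    exact ⟨𝒮, IsCoreFamily.of_le ⟨hcl, hdeg⟩ (by omega), hcov⟩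
  · rintro ⟨𝒮, ⟨hcl, hdeg⟩, hcov⟩
    refine le_csSup ⟨#(G.cliqueFinset s), ?_⟩ ⟨hc, 𝒮, hcl, hcov, hdeg⟩
    rintro c' ⟨-, 𝒯, hcl, hcov, hdeg⟩
    calc c' ≤ #{S ∈ 𝒯 | R ⊆ S} := hdeg R hR hcov
      _ ≤ #𝒯 := card_filter_le _ _
      _ ≤ #(G.cliqueFinset s) := card_le_card hcl

lemma le_coreNumber_of_le_degree {T : Finset (Finset V)} (hT : ∀ S ∈ T, S ∈ G.cliqueFinset s)
    {c : ℕ} (hc : 1 ≤ c)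
    (hdeg : ∀ R ∈ G.cliqueFinset r, (∃ S ∈ T, R ⊆ S) → coreNumber G r s R < c →
      c ≤ #{S ∈ T | R ⊆ S})
    {R : Finset V} (hR : R ∈ G.cliqueFinset r) (hRT : ∃ S ∈ T, R ⊆ S) :
    c ≤ coreNumber G r s R := by
  obtain ⟨𝒦, h𝒦, h𝒦max⟩ := exists_isCoreFamily_forall_subset G r s c
  have hcore : IsCoreFamily G r s c (T ∪ 𝒦) := by
    refine ⟨fun S hS => (mem_union.1 hS).elim (hT S) (h𝒦.1 S), ?_⟩
    rintro R' hR' ⟨S, hS, hR'S⟩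
    have of_cover_𝒦 : (∃ S ∈ 𝒦, R' ⊆ S) → c ≤ #{S ∈ T ∪ 𝒦 | R' ⊆ S} := fun hcov =>
      (h𝒦.2 R' hR' hcov).trans (card_le_card (filter_subset_filter _ subset_union_right))
    obtain hST | hS𝒦 := mem_union.1 hS
    · by_cases hlow : coreNumber G r s R' < c
      · exact (hdeg R' hR' ⟨S, hST, hR'S⟩ hlow).trans
          (card_le_card (filter_subset_filter _ subset_union_left))
      · obtain ⟨𝒮, h𝒮, S', hS', hR'S'⟩ := (le_coreNumber_iff hR' hc).1 (not_lt.1 hlow)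
        exact of_cover_𝒦 ⟨S', h𝒦max 𝒮 h𝒮 hS', hR'S'⟩
    · exact of_cover_𝒦 ⟨S, hS𝒦, hR'S⟩
  obtain ⟨S, hS, hRS⟩ := hRT
  exact (le_coreNumber_iff hR hc).2 ⟨T ∪ 𝒦, hcore, S, mem_union_left _ hS, hRS⟩

end CoreFamily

section Peeling

variable [Fintype V] [DecidableEq V] (G : SimpleGraph V) [DecidableRel G.Adj] (r s : ℕ)
  (ℓ : ℝ) (P : Finset (Finset V))

noncomputable def lowCliques : Finset (Finset V) :=
  {R ∈ G.cliqueFinset r | R ∉ P ∧ (coreNumber G r s R : ℝ) ≤ ℓ}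

noncomputable def lowResidualCliques : Finset (Finset V) :=
  {S ∈ G.cliqueFinset s | (∀ Q ∈ P, ¬ Q ⊆ S) ∧ ∃ R ∈ lowCliques G r s ℓ P, R ⊆ S}

variable {G r s ℓ P}

lemma lowCliques_insert (R : Finset V) :
    lowCliques G r s ℓ (insert R P) = (lowCliques G r s ℓ P).erase R := by
  ext R'
  simp only [lowCliques, mem_filter, mem_erase, mem_insert, not_or]
  tauto

lemma lowResidualCliques_insert (R : Finset V) :
    lowResidualCliques G r s ℓ (insert R P) = {S ∈ lowResidualCliques G r s ℓ P | ¬ R ⊆ S} := by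
  ext S
  simp only [lowResidualCliques, lowCliques_insert, mem_filter, mem_erase, mem_insert,
    forall_eq_or_imp]
  constructor
  · rintro ⟨hS, ⟨hRS, hres⟩, R', ⟨-, hR'⟩, hR'S⟩
    exact ⟨⟨hS, hres, R', hR', hR'S⟩, hRS⟩
  · rintro ⟨⟨hS, hres, R', hR', hR'S⟩, hRS⟩
    exact ⟨hS, ⟨hRS, hres⟩, R', ⟨fun h => hRS (h ▸ hR'S), hR'⟩, hR'S⟩

lemma exists_mem_lowCliques_degree_le (hℓ : 0 ≤ ℓ)
    (hT : (lowResidualCliques G r s ℓ P).Nonempty) :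
    ∃ R ∈ lowCliques G r s ℓ P, (#{S ∈ lowResidualCliques G r s ℓ P | R ⊆ S} : ℝ) ≤ ℓ := by
  by_contra! hhigh
  obtain ⟨S₀, hS₀⟩ := hT
  obtain ⟨-, -, R₀, hR₀, hR₀S₀⟩ := mem_filter.1 hS₀
  obtain ⟨hR₀cl, -, hR₀low⟩ := mem_filter.1 hR₀
  have hR₀high : ⌊ℓ⌋₊ + 1 ≤ coreNumber G r s R₀ := by
    refine le_coreNumber_of_le_degree (fun S hS => (mem_filter.1 hS).1) le_add_self ?_
      hR₀cl ⟨S₀, hS₀, hR₀S₀⟩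
    rintro R hR ⟨S, hS, hRS⟩ hlow
    have hRlow : R ∈ lowCliques G r s ℓ P := mem_filter.2 ⟨hR,
      fun hRP => (mem_filter.1 hS).2.1 R hRP hRS,
      (Nat.cast_le.2 (Nat.lt_succ_iff.1 hlow)).trans (Nat.floor_le hℓ)⟩
    exact (Nat.floor_lt hℓ).2 (hhigh R hRlow)
  have := Nat.lt_floor_add_one ℓ
  have : ((⌊ℓ⌋₊ + 1 : ℕ) : ℝ) ≤ coreNumber G r s R₀ := Nat.cast_le.2 hR₀high
  push_cast at this
  linarith

theorem card_lowResidualCliques_le (hℓ : 0 ≤ ℓ) (P : Finset (Finset V)) :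
    (#(lowResidualCliques G r s ℓ P) : ℝ) ≤ ℓ * #(lowCliques G r s ℓ P) := by
  obtain hT | hT := (lowResidualCliques G r s ℓ P).eq_empty_or_nonempty
  · rw [hT, card_empty, Nat.cast_zero]
    positivity
  obtain ⟨R, hR, hdeg⟩ := exists_mem_lowCliques_degree_le hℓ hT
  have ih := card_lowResidualCliques_le hℓ (insert R P)
  rw [lowCliques_insert, lowResidualCliques_insert, card_erase_of_mem hR,
    Nat.cast_sub (card_pos.2 ⟨R, hR⟩), Nat.cast_one] at ih
  have hsplit := card_filter_add_card_filter_not (s := lowResidualCliques G r s ℓ P) (R ⊆ ·)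
  calc (#(lowResidualCliques G r s ℓ P) : ℝ)
      = #{S ∈ lowResidualCliques G r s ℓ P | R ⊆ S}
        + #{S ∈ lowResidualCliques G r s ℓ P | ¬ R ⊆ S} := by exact_mod_cast hsplit.symm
    _ ≤ ℓ + ℓ * (#(lowCliques G r s ℓ P) - 1) := add_le_add hdeg ih
    _ = ℓ * #(lowCliques G r s ℓ P) := by ring
termination_by #(lowCliques G r s ℓ P)
decreasing_by
  rw [lowCliques_insert]
  exact card_erase_lt_of_mem hR

end Peeling

theorem stmt0_general [Fintype V] [DecidableEq V] (G : SimpleGraph V) [DecidableRel G.Adj]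
    (r s : ℕ)
    (ℓ : ℝ) (hℓ : 0 ≤ ℓ)
    (P : Finset (Finset V))
    (Sl : Finset (Finset V))
    (hSl : Sl = (G.cliqueFinset r).filter
      (fun R => R ∉ P ∧ (coreNumber G r s R : ℝ) ≤ ℓ)) :
    (((G.cliqueFinset s).filter
        (fun S => (∀ Q ∈ P, ¬ Q ⊆ S) ∧ ∃ R ∈ Sl, R ⊆ S)).card : ℝ)
      ≤ ℓ * Sl.card := by
  subst hSl
  exact card_lowResidualCliques_le hℓ P

/-- For every real `ℓ ≥ 0` and every finite set `P` of `r`-cliques of `G`, letting `Sl` be the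
set of `r`-cliques of `G` not in `P` with `(r,s)`-clique core number at most `ℓ`, the number of
`s`-cliques of `G` that are residual with respect to `P` and contain at least one member of
`Sl` is at most `ℓ * |Sl|`. -/
theorem stmt0 [Fintype V] [DecidableEq V] (G : SimpleGraph V) [DecidableRel G.Adj]
    (r s : ℕ) (hr : 1 ≤ r) (hrs : r < s)
    (ℓ : ℝ) (hℓ : 0 ≤ ℓ)
    (P : Finset (Finset V)) (hP : ∀ Q ∈ P, Q ∈ G.cliqueFinset r)
    (Sl : Finset (Finset V))
    (hSl : Sl = (G.cliqueFinset r).filter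
      (fun R => R ∉ P ∧ (coreNumber G r s R : ℝ) ≤ ℓ)) :
    (((G.cliqueFinset s).filter
        (fun S => (∀ Q ∈ P, ¬ Q ⊆ S) ∧ ∃ R ∈ Sl, R ⊆ S)).card : ℝ)
      ≤ ℓ * Sl.card :=
  stmt0_general G r s ℓ hℓ P Sl hSl
end

section
/- For every real number ℓ ≥ 0 and every finite set P of r-cliques of G, let S_ℓ denote the set of r-cliques of G not in P whose (r,s)-clique core number is at most ℓ. Then the sum over all R ∈ S_ℓ of the residual s-clique-degree of R with respect to P is at most C(s,r) · ℓ · |S_ℓ|, where C(s,r) denotes the binomial coefficient s choose r. -/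
open Finset

variable {V : Type*}

/-- The residual `s`-clique-degree of an `r`-clique `R` with respect to a peeled set `P`:
the number of `s`-cliques of `G` containing `R` and containing no member of `P`. -/
def residualDeg [Fintype V] [DecidableEq V] (G : SimpleGraph V) [DecidableRel G.Adj]
    (s : ℕ) (P : Finset (Finset V)) (R : Finset V) : ℕ :=
  ((G.cliqueFinset s).filter (fun S => R ⊆ S ∧ ∀ Q ∈ P, ¬ Q ⊆ S)).card

/-- Auxiliary: a family `𝒮` of `s`-cliques is *valid at level `c`* if every `r`-clique
contained in a member of `𝒮` is contained in at least `c` members of `𝒮`. -/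
def Valid [Fintype V] [DecidableEq V] (G : SimpleGraph V) [DecidableRel G.Adj]
    (r s c : ℕ) (𝒮 : Finset (Finset V)) : Prop :=
  (∀ S ∈ 𝒮, S ∈ G.cliqueFinset s) ∧
  ∀ R' ∈ G.cliqueFinset r, (∃ S ∈ 𝒮, R' ⊆ S) →
    c ≤ (𝒮.filter (fun S => R' ⊆ S)).card

lemma core_set_eq [Fintype V] [DecidableEq V] (G : SimpleGraph V) [DecidableRel G.Adj]
    (r s : ℕ) (R : Finset V) :
    {c : ℕ | 1 ≤ c ∧ ∃ 𝒮 : Finset (Finset V),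
      (∀ S ∈ 𝒮, S ∈ G.cliqueFinset s) ∧ (∃ S ∈ 𝒮, R ⊆ S) ∧
      ∀ R' ∈ G.cliqueFinset r, (∃ S ∈ 𝒮, R' ⊆ S) →
        c ≤ (𝒮.filter (fun S => R' ⊆ S)).card}
    = {c : ℕ | 1 ≤ c ∧ ∃ 𝒮 : Finset (Finset V),
        Valid G r s c 𝒮 ∧ ∃ S ∈ 𝒮, R ⊆ S} := by
  ext c
  simp only [Set.mem_setOf_eq, Valid]
  tauto

lemma core_bddAbove [Fintype V] [DecidableEq V] (G : SimpleGraph V) [DecidableRel G.Adj]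
    (r s : ℕ) (hrs : r ≤ s) (R : Finset V) :
    BddAbove {c : ℕ | 1 ≤ c ∧ ∃ 𝒮 : Finset (Finset V),
      Valid G r s c 𝒮 ∧ ∃ S ∈ 𝒮, R ⊆ S} := by
  refine ⟨(G.cliqueFinset s).card, fun c hc => ?_⟩
  obtain ⟨-, 𝒮, ⟨h𝒮s, h𝒮deg⟩, S, hS, -⟩ := hc
  have hSmem := h𝒮s S hS
  have hSclique := SimpleGraph.mem_cliqueFinset_iff.mp hSmem
  obtain ⟨t, hts, htcard⟩ := Finset.exists_subset_card_eq
    (show r ≤ S.card by rw [hSclique.2]; exact hrs)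
  have ht : t ∈ G.cliqueFinset r :=
    SimpleGraph.mem_cliqueFinset_iff.mpr ⟨hSclique.1.subset hts, htcard⟩
  calc c ≤ (𝒮.filter (fun S => t ⊆ S)).card := h𝒮deg t ht ⟨S, hS, hts⟩
    _ ≤ 𝒮.card := Finset.card_le_card (Finset.filter_subset _ _)
    _ ≤ (G.cliqueFinset s).card := Finset.card_le_card h𝒮s

/-- If there is a valid family at level `c ≥ 1` containing a superset of `R`,
then `coreNumber G r s R ≥ c`. -/
lemma core_ge [Fintype V] [DecidableEq V] (G : SimpleGraph V) [DecidableRel G.Adj]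
    (r s c : ℕ) (hrs : r ≤ s) (R : Finset V) (hc : 1 ≤ c)
    (𝒮 : Finset (Finset V)) (hv : Valid G r s c 𝒮) (hR : ∃ S ∈ 𝒮, R ⊆ S) :
    c ≤ coreNumber G r s R := by
  rw [coreNumber, core_set_eq]
  exact le_csSup (core_bddAbove G r s hrs R) ⟨hc, 𝒮, hv, hR⟩

/-- Conversely, if `coreNumber G r s R ≥ c ≥ 1`, there is a valid family at level `c`
containing a superset of `R`. -/
lemma exists_valid_of_core_ge [Fintype V] [DecidableEq V] (G : SimpleGraph V)
    [DecidableRel G.Adj] (r s c : ℕ) (hrs : r ≤ s) (R : Finset V) (hc : 1 ≤ c)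
    (h : c ≤ coreNumber G r s R) :
    ∃ 𝒮 : Finset (Finset V), Valid G r s c 𝒮 ∧ ∃ S ∈ 𝒮, R ⊆ S := by
  rw [coreNumber, core_set_eq] at h
  set A := {c : ℕ | 1 ≤ c ∧ ∃ 𝒮 : Finset (Finset V),
      Valid G r s c 𝒮 ∧ ∃ S ∈ 𝒮, R ⊆ S} with hA
  have hne : A.Nonempty := by
    by_contra hne
    rw [Set.not_nonempty_iff_eq_empty] at hne
    rw [hne, csSup_empty, Nat.bot_eq_zero] at h
    omega
  have hmem : sSup A ∈ A := Nat.sSup_mem hne (core_bddAbove G r s hrs R)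
  obtain ⟨-, 𝒮, ⟨h1, h2⟩, hR⟩ := hmem
  exact ⟨𝒮, ⟨h1, fun R' hR' hex => le_trans h (h2 R' hR' hex)⟩, hR⟩

/-- For every real `ℓ ≥ 0` and finite set `P` of `r`-cliques of `G`, letting `Sl` be the set of
`r`-cliques of `G` not in `P` with `(r,s)`-clique core number at most `ℓ`, the sum over
`R ∈ Sl` of the residual `s`-clique-degree of `R` with respect to `P` is at most
`C(s,r) * ℓ * |Sl|`. -/
theorem stmt2 [Fintype V] [DecidableEq V] (G : SimpleGraph V) [DecidableRel G.Adj]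
    (r s : ℕ) (hr : 1 ≤ r) (hrs : r < s)
    (ℓ : ℝ) (hℓ : 0 ≤ ℓ)
    (P : Finset (Finset V)) (hP : ∀ Q ∈ P, Q ∈ G.cliqueFinset r)
    (Sl : Finset (Finset V))
    (hSl : Sl = (G.cliqueFinset r).filter
      (fun R => R ∉ P ∧ (coreNumber G r s R : ℝ) ≤ ℓ)) :
    (∑ R ∈ Sl, (residualDeg G s P R : ℝ)) ≤ (s.choose r : ℝ) * ℓ * (Sl.card : ℝ) := by
  classical
  have hrs' : r ≤ s := hrs.le
  set c : ℕ := ⌊ℓ⌋₊ + 1 with hc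
  -- The union of all valid families at level c.
  set 𝒯 : Finset (Finset V) := (G.cliqueFinset s).filter
    (fun S => ∃ 𝒮 : Finset (Finset V), Valid G r s c 𝒮 ∧ S ∈ 𝒮) with h𝒯def
  have h𝒯sub : ∀ 𝒮 : Finset (Finset V), Valid G r s c 𝒮 → 𝒮 ⊆ 𝒯 := by
    intro 𝒮 hv S hS
    rw [h𝒯def, Finset.mem_filter]
    exact ⟨hv.1 S hS, 𝒮, hv, hS⟩
  have h𝒯valid : Valid G r s c 𝒯 := by
    refine ⟨fun S hS => (Finset.mem_filter.mp hS).1, fun R' hR' ⟨S, hS, hsub⟩ => ?_⟩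
    obtain ⟨-, 𝒮, hv, hS𝒮⟩ := Finset.mem_filter.mp hS
    calc c ≤ (𝒮.filter (fun S => R' ⊆ S)).card := hv.2 R' hR' ⟨S, hS𝒮, hsub⟩
      _ ≤ (𝒯.filter (fun S => R' ⊆ S)).card :=
          Finset.card_le_card (Finset.filter_subset_filter _ (h𝒯sub 𝒮 hv))
  -- Members of Sl have core number ≤ ℓ < c.
  have hSlcore : ∀ R ∈ Sl, ¬ (c ≤ coreNumber G r s R) := by
    intro R hR hcore
    rw [hSl, Finset.mem_filter] at hR
    have h1 : (c : ℝ) ≤ (coreNumber G r s R : ℝ) := by exact_mod_cast hcore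
    have h2 := hR.2.2
    have h3 : ℓ < (c : ℝ) := by
      rw [hc]; push_cast; exact Nat.lt_floor_add_one ℓ
    linarith
  -- r-cliques not in P and not in Sl have core number ≥ c.
  have hbig : ∀ R' ∈ G.cliqueFinset r, R' ∉ P → R' ∉ Sl → c ≤ coreNumber G r s R' := by
    intro R' h1 h2 h3
    have : ¬ ((coreNumber G r s R' : ℝ) ≤ ℓ) := by
      intro h
      exact h3 (by rw [hSl, Finset.mem_filter]; exact ⟨h1, h2, h⟩)
    push_neg at this
    rw [hc]
    exact (Nat.floor_lt hℓ).mpr this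
  -- Peeling lemma.
  have key : ∀ n : ℕ, ∀ W B : Finset (Finset V), W.card ≤ n → W ⊆ Sl →
      (∀ S ∈ B, S ∈ G.cliqueFinset s ∧ ∀ Q ∈ P, ¬ Q ⊆ S) →
      (∀ S ∈ B, ∃ R ∈ W, R ⊆ S) →
      (∀ S ∈ B, ∀ R ∈ Sl, R ⊆ S → R ∈ W) →
      B.card ≤ ⌊ℓ⌋₊ * W.card := by
    intro n
    induction n with
    | zero =>
      intro W B hWn hWSl hB1 hB2 hB3
      have hW : W = ∅ := Finset.card_eq_zero.mp (Nat.le_zero.mp hWn)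
      have hB : B = ∅ := by
        rw [Finset.eq_empty_iff_forall_notMem]
        intro S hS
        obtain ⟨R, hR, -⟩ := hB2 S hS
        simp [hW] at hR
      simp [hB]
    | succ n ih =>
      intro W B hWn hWSl hB1 hB2 hB3
      by_cases hBe : B = ∅
      · rw [hBe, Finset.card_empty]; exact Nat.zero_le _
      by_cases hpeel : ∃ R ∈ W, (∃ S ∈ B, R ⊆ S) ∧
          (B.filter (fun S => R ⊆ S)).card < c
      · -- peel R
        obtain ⟨R, hRW, -, hdeg⟩ := hpeel
        set B' := B.filter (fun S => ¬ R ⊆ S) with hB'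
        set W' := W.erase R with hW'
        have hcard : B.card = (B.filter (fun S => R ⊆ S)).card + B'.card :=
          (Finset.card_filter_add_card_filter_not (fun S => R ⊆ S)).symm
        have hW'card : W'.card = W.card - 1 := Finset.card_erase_of_mem hRW
        have hWpos : 1 ≤ W.card := Finset.card_pos.mpr ⟨R, hRW⟩
        have hstep : B'.card ≤ ⌊ℓ⌋₊ * W'.card := by
          refine ih W' B' (by omega) (fun x hx => hWSl (Finset.mem_of_mem_erase hx))
            (fun S hS => hB1 S (Finset.mem_of_mem_filter S hS)) ?_ ?_
          · intro S hS
            obtain ⟨hSB, hRS⟩ := Finset.mem_filter.mp hS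
            obtain ⟨R'', hR''W, hR''S⟩ := hB2 S hSB
            refine ⟨R'', Finset.mem_erase.mpr ⟨?_, hR''W⟩, hR''S⟩
            rintro rfl; exact hRS hR''S
          · intro S hS R'' hR''Sl hR''S
            obtain ⟨hSB, hRS⟩ := Finset.mem_filter.mp hS
            refine Finset.mem_erase.mpr ⟨?_, hB3 S hSB R'' hR''Sl hR''S⟩
            rintro rfl; exact hRS hR''S
        have hd : (B.filter (fun S => R ⊆ S)).card ≤ ⌊ℓ⌋₊ := by omega
        calc B.card = (B.filter (fun S => R ⊆ S)).card + B'.card := hcard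
          _ ≤ ⌊ℓ⌋₊ + ⌊ℓ⌋₊ * W'.card := Nat.add_le_add hd hstep
          _ = ⌊ℓ⌋₊ * (1 + W'.card) := by ring
          _ ≤ ⌊ℓ⌋₊ * W.card := Nat.mul_le_mul_left _ (by omega)
      · -- no peelable clique: contradiction via core numbers
        exfalso
        push_neg at hpeel
        obtain ⟨S₀, hS₀⟩ := Finset.nonempty_iff_ne_empty.mpr hBe
        obtain ⟨R₀, hR₀W, hR₀S₀⟩ := hB2 S₀ hS₀
        have hvalid : Valid G r s c (B ∪ 𝒯) := by
          constructor
          · intro S hS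
            rcases Finset.mem_union.mp hS with h | h
            · exact (hB1 S h).1
            · exact (Finset.mem_filter.mp h).1
          · intro R' hR' ⟨S, hS, hsub⟩
            rcases Finset.mem_union.mp hS with hSB | hS𝒯
            · -- S ∈ B, so R' is not in P
              have hR'P : R' ∉ P := fun hmem => (hB1 S hSB).2 R' hmem hsub
              by_cases hR'Sl : R' ∈ Sl
              · have hR'W : R' ∈ W := hB3 S hSB R' hR'Sl hsub
                have := hpeel R' hR'W ⟨S, hSB, hsub⟩
                calc c ≤ (B.filter (fun S => R' ⊆ S)).card := this
                  _ ≤ ((B ∪ 𝒯).filter (fun S => R' ⊆ S)).card :=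
                      Finset.card_le_card
                        (Finset.filter_subset_filter _ Finset.subset_union_left)
              · have hcge := hbig R' hR' hR'P hR'Sl
                obtain ⟨𝒮, hv, hR'mem⟩ :=
                  exists_valid_of_core_ge G r s c hrs' R' (by omega) hcge
                calc c ≤ (𝒮.filter (fun S => R' ⊆ S)).card := by
                      obtain ⟨S', hS', hsub'⟩ := hR'mem
                      exact hv.2 R' hR' ⟨S', hS', hsub'⟩
                  _ ≤ ((B ∪ 𝒯).filter (fun S => R' ⊆ S)).card :=
                      Finset.card_le_card (Finset.filter_subset_filter _
                        ((h𝒯sub 𝒮 hv).trans Finset.subset_union_right))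
            · calc c ≤ (𝒯.filter (fun S => R' ⊆ S)).card :=
                    h𝒯valid.2 R' hR' ⟨S, hS𝒯, hsub⟩
                _ ≤ ((B ∪ 𝒯).filter (fun S => R' ⊆ S)).card :=
                    Finset.card_le_card
                      (Finset.filter_subset_filter _ Finset.subset_union_right)
        have hR₀clique : R₀ ∈ G.cliqueFinset r := by
          have := hWSl hR₀W
          rw [hSl, Finset.mem_filter] at this
          exact this.1
        have : c ≤ coreNumber G r s R₀ :=
          core_ge G r s c hrs' R₀ (by omega) (B ∪ 𝒯) hvalid
            ⟨S₀, Finset.mem_union_left _ hS₀, hR₀S₀⟩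
        exact hSlcore R₀ (hWSl hR₀W) this
  -- Counting.
  set B₀ : Finset (Finset V) := (G.cliqueFinset s).filter
    (fun S => (∀ Q ∈ P, ¬ Q ⊆ S) ∧ ∃ R ∈ Sl, R ⊆ S) with hB₀def
  have hcount1 : ∀ R ∈ Sl, residualDeg G s P R = (B₀.filter (fun S => R ⊆ S)).card := by
    intro R hR
    rw [residualDeg, hB₀def, Finset.filter_filter]
    congr 1
    apply Finset.filter_congr
    intro S hS
    constructor
    · rintro ⟨h1, h2⟩; exact ⟨⟨h2, R, hR, h1⟩, h1⟩
    · rintro ⟨⟨h2, -⟩, h1⟩; exact ⟨h1, h2⟩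
  have hcount2 : ∑ R ∈ Sl, residualDeg G s P R
      = ∑ S ∈ B₀, (Sl.filter (fun R => R ⊆ S)).card := by
    rw [Finset.sum_congr rfl hcount1]
    simp only [Finset.card_filter]
    exact Finset.sum_comm
  have hperS : ∀ S ∈ B₀, (Sl.filter (fun R => R ⊆ S)).card ≤ s.choose r := by
    intro S hS
    have hSc : S.card = s := (SimpleGraph.mem_cliqueFinset_iff.mp
      (Finset.mem_of_mem_filter S hS)).2
    have hsub : Sl.filter (fun R => R ⊆ S) ⊆ S.powersetCard r := by
      intro R hR
      obtain ⟨hRSl, hRS⟩ := Finset.mem_filter.mp hR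
      rw [hSl, Finset.mem_filter] at hRSl
      exact Finset.mem_powersetCard.mpr
        ⟨hRS, (SimpleGraph.mem_cliqueFinset_iff.mp hRSl.1).2⟩
    calc (Sl.filter (fun R => R ⊆ S)).card ≤ (S.powersetCard r).card :=
          Finset.card_le_card hsub
      _ = s.choose r := by rw [Finset.card_powersetCard, hSc]
  have hB₀card : B₀.card ≤ ⌊ℓ⌋₊ * Sl.card := by
    refine key Sl.card Sl B₀ le_rfl Finset.Subset.rfl ?_ ?_ ?_
    · intro S hS
      obtain ⟨h1, h2, -⟩ := Finset.mem_filter.mp hS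
      exact ⟨h1, h2⟩
    · intro S hS
      exact (Finset.mem_filter.mp hS).2.2
    · intro S hS R hRSl hRS; exact hRSl
  have hnat : ∑ R ∈ Sl, residualDeg G s P R ≤ s.choose r * (⌊ℓ⌋₊ * Sl.card) := by
    calc ∑ R ∈ Sl, residualDeg G s P R
        = ∑ S ∈ B₀, (Sl.filter (fun R => R ⊆ S)).card := hcount2
      _ ≤ ∑ S ∈ B₀, s.choose r := Finset.sum_le_sum hperS
      _ = B₀.card * s.choose r := by rw [Finset.sum_const, smul_eq_mul]
      _ ≤ (⌊ℓ⌋₊ * Sl.card) * s.choose r := Nat.mul_le_mul_right _ hB₀card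
      _ = s.choose r * (⌊ℓ⌋₊ * Sl.card) := by ring
  have hfloor : (⌊ℓ⌋₊ : ℝ) ≤ ℓ := Nat.floor_le hℓ
  calc (∑ R ∈ Sl, (residualDeg G s P R : ℝ))
      = ((∑ R ∈ Sl, residualDeg G s P R : ℕ) : ℝ) := by push_cast; ring
    _ ≤ ((s.choose r * (⌊ℓ⌋₊ * Sl.card) : ℕ) : ℝ) := by exact_mod_cast hnat
    _ = (s.choose r : ℝ) * (⌊ℓ⌋₊ : ℝ) * (Sl.card : ℝ) := by push_cast; ring
    _ ≤ (s.choose r : ℝ) * ℓ * (Sl.card : ℝ) := by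
        have h1 : (0:ℝ) ≤ (s.choose r : ℝ) := Nat.cast_nonneg _
        have h2 : (0:ℝ) ≤ (Sl.card : ℝ) := Nat.cast_nonneg _
        have := mul_le_mul_of_nonneg_right
          (mul_le_mul_of_nonneg_left hfloor h1) h2
        linarith
end

section
/- Let ℓ ≥ 0 be a real number and let P be a finite set of r-cliques of G such that every member of P has (r,s)-clique core number at most ℓ. Then every r-clique R of G not in P whose (r,s)-clique core number k_R satisfies k_R > ℓ has residual s-clique-degree with respect to P at least k_R. -/
open Finset

variable {V : Type*}

lemma bdd_aux [Fintype V] [DecidableEq V] (G : SimpleGraph V) [DecidableRel G.Adj]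
    (r s : ℕ) (R : Finset V) (hR : R ∈ G.cliqueFinset r) :
    BddAbove {c : ℕ | 1 ≤ c ∧ ∃ 𝒮 : Finset (Finset V),
      (∀ S ∈ 𝒮, S ∈ G.cliqueFinset s) ∧ (∃ S ∈ 𝒮, R ⊆ S) ∧
      ∀ R' ∈ G.cliqueFinset r, (∃ S ∈ 𝒮, R' ⊆ S) →
        c ≤ (𝒮.filter (fun S => R' ⊆ S)).card} := by
  refine ⟨(G.cliqueFinset s).card, ?_⟩
  rintro c ⟨-, 𝒮, hcl, hex, hdeg⟩
  have h1 : c ≤ (𝒮.filter (fun S => R ⊆ S)).card := hdeg R hR hex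
  have h2 : 𝒮 ⊆ G.cliqueFinset s := fun S hS => hcl S hS
  calc c ≤ (𝒮.filter (fun S => R ⊆ S)).card := h1
    _ ≤ 𝒮.card := Finset.card_filter_le _ _
    _ ≤ (G.cliqueFinset s).card := Finset.card_le_card h2

/-- Let `ℓ ≥ 0` and let `P` be a finite set of `r`-cliques of `G`, each with `(r,s)`-clique
core number at most `ℓ`. Then every `r`-clique `R` of `G` not in `P` whose core number exceeds
`ℓ` has residual `s`-clique-degree with respect to `P` at least its core number. -/
theorem stmt3 [Fintype V] [DecidableEq V] (G : SimpleGraph V) [DecidableRel G.Adj]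
    (r s : ℕ) (hr : 1 ≤ r) (hrs : r < s)
    (ℓ : ℝ) (hℓ : 0 ≤ ℓ)
    (P : Finset (Finset V)) (hP : ∀ Q ∈ P, Q ∈ G.cliqueFinset r)
    (hPcore : ∀ Q ∈ P, (coreNumber G r s Q : ℝ) ≤ ℓ)
    (R : Finset V) (hR : R ∈ G.cliqueFinset r) (hRP : R ∉ P)
    (hRcore : ℓ < (coreNumber G r s R : ℝ)) :
    coreNumber G r s R ≤ residualDeg G s P R := by
  set k := coreNumber G r s R with hk
  have hkpos : 0 < k := by exact_mod_cast hℓ.trans_lt hRcore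
  have hne : {c : ℕ | 1 ≤ c ∧ ∃ 𝒮 : Finset (Finset V),
      (∀ S ∈ 𝒮, S ∈ G.cliqueFinset s) ∧ (∃ S ∈ 𝒮, R ⊆ S) ∧
      ∀ R' ∈ G.cliqueFinset r, (∃ S ∈ 𝒮, R' ⊆ S) →
        c ≤ (𝒮.filter (fun S => R' ⊆ S)).card}.Nonempty := by
    by_contra h
    rw [Set.not_nonempty_iff_eq_empty] at h
    have : k = 0 := by rw [hk]; unfold coreNumber; rw [h]; exact csSup_empty
    omega
  have hmem := Nat.sSup_mem hne (bdd_aux G r s R hR)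
  obtain ⟨-, 𝒮, hcl, ⟨S0, hS0, hRS0⟩, hdeg⟩ := hmem
  have hres : ∀ S ∈ 𝒮, ∀ Q ∈ P, ¬ Q ⊆ S := by
    intro S hS Q hQ hQS
    have hQmem : k ∈ {c : ℕ | 1 ≤ c ∧ ∃ 𝒮 : Finset (Finset V),
        (∀ S ∈ 𝒮, S ∈ G.cliqueFinset s) ∧ (∃ S ∈ 𝒮, Q ⊆ S) ∧
        ∀ R' ∈ G.cliqueFinset r, (∃ S ∈ 𝒮, R' ⊆ S) →
          c ≤ (𝒮.filter (fun S => R' ⊆ S)).card} :=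
      ⟨hkpos, 𝒮, hcl, ⟨S, hS, hQS⟩, hdeg⟩
    have hle : k ≤ coreNumber G r s Q :=
      le_csSup (bdd_aux G r s Q (hP Q hQ)) hQmem
    have h1 := hPcore Q hQ
    have h2 : (k : ℝ) ≤ (coreNumber G r s Q : ℝ) := by exact_mod_cast hle
    linarith
  have hsub : 𝒮.filter (fun S => R ⊆ S) ⊆
      (G.cliqueFinset s).filter (fun S => R ⊆ S ∧ ∀ Q ∈ P, ¬ Q ⊆ S) := by
    intro S hS
    rw [Finset.mem_filter] at hS ⊢
    exact ⟨hcl S hS.1, hS.2, hres S hS.1⟩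
  calc k ≤ (𝒮.filter (fun S => R ⊆ S)).card := hdeg R hR ⟨S0, hS0, hRS0⟩
    _ ≤ residualDeg G s P R := Finset.card_le_card hsub
end

section
/- Let R_1, …, R_N be an exact peeling order of G, and for each i let d_i be the residual s-clique-degree of R_i with respect to {R_1, …, R_{i-1}}. Then for every i, d_i ≤ k_{R_i}; that is, when an r-clique is peeled in an exact peeling order, its residual s-clique-degree at that moment is at most its (r,s)-clique core number. -/
open Finset

variable {V : Type*}

/-- The set of cliques peeled strictly before step `i` in the sequence `Rseq`. -/
def peeledBefore [DecidableEq V] {N : ℕ} (Rseq : Fin N → Finset V) (i : Fin N) :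
    Finset (Finset V) :=
  (Finset.Iio i).image Rseq

/-- In an exact peeling order `R_1, …, R_N` of all `r`-cliques of `G` (each peeled clique has
minimum residual `s`-clique-degree among unpeeled `r`-cliques), the residual
`s`-clique-degree of `R_i` at the moment it is peeled is at most its `(r,s)`-clique core
number. -/
theorem stmt6 [Fintype V] [DecidableEq V] (G : SimpleGraph V) [DecidableRel G.Adj]
    (r s : ℕ) (hr : 1 ≤ r) (hrs : r < s)
    (N : ℕ) (Rseq : Fin N → Finset V)
    (hinj : Function.Injective Rseq)
    (hall : ∀ C : Finset V, C ∈ G.cliqueFinset r ↔ ∃ i, Rseq i = C)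
    (hmin : ∀ i : Fin N, ∀ R' ∈ G.cliqueFinset r, R' ∉ peeledBefore Rseq i →
      residualDeg G s (peeledBefore Rseq i) (Rseq i)
        ≤ residualDeg G s (peeledBefore Rseq i) R') :
    ∀ i : Fin N,
      residualDeg G s (peeledBefore Rseq i) (Rseq i) ≤ coreNumber G r s (Rseq i) := by
  intro i
  set P := peeledBefore Rseq i with hP
  by_cases h0 : residualDeg G s P (Rseq i) = 0
  · simp [h0]
  set c := residualDeg G s P (Rseq i) with hc
  have hc1 : 1 ≤ c := Nat.one_le_iff_ne_zero.mpr h0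
  -- the witnessing family
  set 𝒮 : Finset (Finset V) :=
    (G.cliqueFinset s).filter (fun S => ∀ Q ∈ P, ¬ Q ⊆ S) with h𝒮
  have hfil : ∀ R' : Finset V,
      (𝒮.filter (fun S => R' ⊆ S)).card = residualDeg G s P R' := by
    intro R'
    rw [h𝒮, residualDeg, Finset.filter_filter]
    congr 1
    apply Finset.filter_congr
    intro S _
    constructor
    · rintro ⟨h1, h2⟩; exact ⟨h2, h1⟩
    · rintro ⟨h1, h2⟩; exact ⟨h2, h1⟩
  have hbdd : BddAbove {c : ℕ | 1 ≤ c ∧ ∃ 𝒯 : Finset (Finset V),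
      (∀ S ∈ 𝒯, S ∈ G.cliqueFinset s) ∧ (∃ S ∈ 𝒯, Rseq i ⊆ S) ∧
      ∀ R' ∈ G.cliqueFinset r, (∃ S ∈ 𝒯, R' ⊆ S) →
        c ≤ (𝒯.filter (fun S => R' ⊆ S)).card} := by
    refine ⟨Fintype.card (Finset V), ?_⟩
    rintro b ⟨hb1, 𝒯, h𝒯s, ⟨S, hS𝒯, hRS⟩, hbound⟩
    have hS : S ∈ G.cliqueFinset s := h𝒯s S hS𝒯
    rw [SimpleGraph.mem_cliqueFinset_iff] at hS
    obtain ⟨R', hR'S, hR'card⟩ := Finset.exists_subset_card_eq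
      (show r ≤ S.card by rw [hS.2]; exact hrs.le)
    have hR' : R' ∈ G.cliqueFinset r := by
      rw [SimpleGraph.mem_cliqueFinset_iff]
      exact ⟨hS.1.subset hR'S, hR'card⟩
    calc b ≤ (𝒯.filter (fun S => R' ⊆ S)).card :=
            hbound R' hR' ⟨S, hS𝒯, hR'S⟩
      _ ≤ 𝒯.card := Finset.card_filter_le _ _
      _ ≤ Fintype.card (Finset V) := Finset.card_le_univ 𝒯
  apply le_csSup hbdd
  refine ⟨hc1, 𝒮, fun S hS => (Finset.mem_filter.mp hS).1, ?_, ?_⟩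
  · -- some member of 𝒮 contains Rseq i, since c ≥ 1
    have : (𝒮.filter (fun S => Rseq i ⊆ S)).Nonempty := by
      rw [← Finset.card_pos, hfil]; omega
    obtain ⟨S, hS⟩ := this
    rw [Finset.mem_filter] at hS
    exact ⟨S, hS.1, hS.2⟩
  · intro R' hR' ⟨S, hS𝒮, hR'S⟩
    have hR'P : R' ∉ P := by
      intro hmem
      rw [h𝒮, Finset.mem_filter] at hS𝒮
      exact hS𝒮.2 R' hmem hR'S
    have := hmin i R' hR' hR'P
    rw [hfil]
    exact this
end

section
/- Let R_1, …, R_N be an exact peeling order of G, and for each i let d_i be the residual s-clique-degree of R_i with respect to {R_1, …, R_{i-1}}. Then for every i, the (r,s)-clique core number of R_i satisfies k_{R_i} = max over 1 ≤ j ≤ i of d_j; that is, the core number of each r-clique equals the maximum, over all peeling steps up to and including its own, of the minimum residual s-clique-degree at that step. -/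
open Finset

variable {V : Type*}

/-- In an exact peeling order `R_1, …, R_N` of all `r`-cliques of `G`, the `(r,s)`-clique core
number of `R_i` equals the maximum, over all peeling steps `j ≤ i`, of the residual
`s`-clique-degree `d_j` of `R_j` at the moment it is peeled. -/
theorem stmt7 [Fintype V] [DecidableEq V] (G : SimpleGraph V) [DecidableRel G.Adj]
    (r s : ℕ) (hr : 1 ≤ r) (hrs : r < s)
    (N : ℕ) (Rseq : Fin N → Finset V)
    (hinj : Function.Injective Rseq)
    (hall : ∀ C : Finset V, C ∈ G.cliqueFinset r ↔ ∃ i, Rseq i = C)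
    (hmin : ∀ i : Fin N, ∀ R' ∈ G.cliqueFinset r, R' ∉ peeledBefore Rseq i →
      residualDeg G s (peeledBefore Rseq i) (Rseq i)
        ≤ residualDeg G s (peeledBefore Rseq i) R') :
    ∀ i : Fin N,
      coreNumber G r s (Rseq i)
        = (Finset.Iic i).sup (fun j => residualDeg G s (peeledBefore Rseq j) (Rseq j)) := by
  intro i
  have hRi : Rseq i ∈ G.cliqueFinset r := (hall _).2 ⟨i, rfl⟩
  apply le_antisymm
  · -- coreNumber ≤ max
    apply csSup_le'
    rintro c ⟨hc1, 𝒮, h𝒮s, ⟨S0, hS0, hRS0⟩, hcore⟩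
    classical
    set T : Finset (Fin N) := Finset.univ.filter (fun k => ∃ S ∈ 𝒮, Rseq k ⊆ S) with hT
    have hiT : i ∈ T := by simp [hT]; exact ⟨S0, hS0, hRS0⟩
    have hTne : T.Nonempty := ⟨i, hiT⟩
    set j := T.min' hTne with hj
    have hjT : j ∈ T := T.min'_mem hTne
    have hji : j ≤ i := T.min'_le i hiT
    obtain ⟨S1, hS1, hRjS1⟩ : ∃ S ∈ 𝒮, Rseq j ⊆ S := by
      simpa [hT] using hjT
    have hsub : 𝒮.filter (fun S => Rseq j ⊆ S) ⊆
        (G.cliqueFinset s).filter (fun S => Rseq j ⊆ S ∧ ∀ Q ∈ peeledBefore Rseq j, ¬ Q ⊆ S) := by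
      intro S hS
      simp only [mem_filter] at hS ⊢
      refine ⟨h𝒮s S hS.1, hS.2, ?_⟩
      intro Q hQ hQS
      simp only [peeledBefore, mem_image, mem_Iio] at hQ
      obtain ⟨k, hk, rfl⟩ := hQ
      have hkT : k ∈ T := by simp [hT]; exact ⟨S, hS.1, hQS⟩
      exact absurd (T.min'_le k hkT) (not_le.2 hk)
    have hc : c ≤ residualDeg G s (peeledBefore Rseq j) (Rseq j) :=
      le_trans (hcore (Rseq j) ((hall _).2 ⟨j, rfl⟩) ⟨S1, hS1, hRjS1⟩)
        (Finset.card_le_card hsub)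
    exact le_trans hc (Finset.le_sup (f := fun j => residualDeg G s (peeledBefore Rseq j) (Rseq j)) (mem_Iic.2 hji))
  · -- max ≤ coreNumber
    classical
    obtain ⟨j, hji, hdj⟩ := Finset.exists_mem_eq_sup (Finset.Iic i) ⟨i, mem_Iic.2 le_rfl⟩
      (fun j => residualDeg G s (peeledBefore Rseq j) (Rseq j))
    rw [hdj]
    set d := residualDeg G s (peeledBefore Rseq j) (Rseq j) with hd
    rcases Nat.eq_zero_or_pos d with h0 | hpos
    · simp [h0]
    rw [mem_Iic] at hji
    -- key: no clique peeled before j equals Rseq k for k ≥ j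
    have hnotpeeled : ∀ k : Fin N, j ≤ k → Rseq k ∉ peeledBefore Rseq j := by
      intro k hk hmem
      simp only [peeledBefore, mem_image, mem_Iio] at hmem
      obtain ⟨l, hl, hlk⟩ := hmem
      exact absurd (hinj hlk ▸ hk : j ≤ l) (not_le.2 hl)
    set 𝒮 : Finset (Finset V) :=
      (G.cliqueFinset s).filter (fun S => ∀ Q ∈ peeledBefore Rseq j, ¬ Q ⊆ S) with h𝒮
    have hcount : ∀ R' : Finset V,
        (𝒮.filter (fun S => R' ⊆ S)).card = residualDeg G s (peeledBefore Rseq j) R' := by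
      intro R'
      rw [h𝒮, Finset.filter_filter, residualDeg]
      congr 1
      apply Finset.filter_congr
      intro S _
      tauto
    have hRid : d ≤ residualDeg G s (peeledBefore Rseq j) (Rseq i) := by
      apply hmin j (Rseq i) hRi (hnotpeeled i hji)
    apply le_csSup
    · refine ⟨(G.cliqueFinset s).card, ?_⟩
      rintro c ⟨hc1, 𝒯, h𝒯s, ⟨S0, hS0, hRS0⟩, hcore⟩
      have h1 : c ≤ (𝒯.filter (fun S => Rseq i ⊆ S)).card :=
        hcore (Rseq i) hRi ⟨S0, hS0, hRS0⟩
      calc c ≤ (𝒯.filter (fun S => Rseq i ⊆ S)).card := h1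
        _ ≤ 𝒯.card := Finset.card_le_card (Finset.filter_subset _ _)
        _ ≤ (G.cliqueFinset s).card := Finset.card_le_card h𝒯s
    · refine ⟨hpos, 𝒮, fun S hS => (Finset.mem_filter.1 hS).1, ?_, ?_⟩
      · have : 0 < (𝒮.filter (fun S => Rseq i ⊆ S)).card := by
          rw [hcount]; exact lt_of_lt_of_le hpos hRid
        obtain ⟨S, hS⟩ := Finset.card_pos.1 this
        exact ⟨S, (Finset.mem_filter.1 hS).1, (Finset.mem_filter.1 hS).2⟩
      · intro R' hR' ⟨S, hS𝒮, hR'S⟩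
        have hR'np : R' ∉ peeledBefore Rseq j := by
          intro hmem
          exact (Finset.mem_filter.1 hS𝒮).2 R' hmem hR'S
        rw [hcount]
        exact hmin j R' hR' hR'np
end

section
/- Let R_1, …, R_N be an exact peeling order of G. Then the (r,s)-clique core numbers are monotonically nondecreasing along this order: for all i ≤ j, k_{R_i} ≤ k_{R_j}. -/
open Finset

variable {V : Type*}

/-- In an exact peeling order `R_1, …, R_N` of all `r`-cliques of `G`, the `(r,s)`-clique core
numbers are monotonically nondecreasing along the order. -/
theorem stmt8 [Fintype V] [DecidableEq V] (G : SimpleGraph V) [DecidableRel G.Adj]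
    (r s : ℕ) (hr : 1 ≤ r) (hrs : r < s)
    (N : ℕ) (Rseq : Fin N → Finset V)
    (hinj : Function.Injective Rseq)
    (hall : ∀ C : Finset V, C ∈ G.cliqueFinset r ↔ ∃ i, Rseq i = C)
    (hmin : ∀ i : Fin N, ∀ R' ∈ G.cliqueFinset r, R' ∉ peeledBefore Rseq i →
      residualDeg G s (peeledBefore Rseq i) (Rseq i)
        ≤ residualDeg G s (peeledBefore Rseq i) R') :
    ∀ i j : Fin N, i ≤ j → coreNumber G r s (Rseq i) ≤ coreNumber G r s (Rseq j) := by
  classical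
  intro i j hij
  -- the defining set of the core number
  set Kset : Finset V → Set ℕ := fun R => {c : ℕ | 1 ≤ c ∧ ∃ 𝒮 : Finset (Finset V),
    (∀ S ∈ 𝒮, S ∈ G.cliqueFinset s) ∧ (∃ S ∈ 𝒮, R ⊆ S) ∧
    ∀ R' ∈ G.cliqueFinset r, (∃ S ∈ 𝒮, R' ⊆ S) →
      c ≤ (𝒮.filter (fun S => R' ⊆ S)).card} with hKset
  have hcore : ∀ R : Finset V, coreNumber G r s R = sSup (Kset R) := fun R => rfl
  have hRi : Rseq i ∈ G.cliqueFinset r := (hall _).2 ⟨i, rfl⟩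
  have hRj : Rseq j ∈ G.cliqueFinset r := (hall _).2 ⟨j, rfl⟩
  have hbdd : ∀ R : Finset V, R ∈ G.cliqueFinset r → BddAbove (Kset R) := by
    intro R hR
    refine ⟨(G.cliqueFinset s).card, ?_⟩
    rintro c ⟨hc1, 𝒮, h1, ⟨S, hS, hRS⟩, h3⟩
    calc c ≤ (𝒮.filter (fun S => R ⊆ S)).card := h3 R hR ⟨S, hS, hRS⟩
      _ ≤ 𝒮.card := Finset.card_filter_le _ _
      _ ≤ (G.cliqueFinset s).card := Finset.card_le_card (fun x hx => h1 x hx)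
  rcases Nat.eq_zero_or_pos (coreNumber G r s (Rseq i)) with h0 | hpos
  · rw [h0]; exact Nat.zero_le _
  have hne : (Kset (Rseq i)).Nonempty := by
    by_contra h
    rw [Set.not_nonempty_iff_eq_empty] at h
    rw [hcore, h] at hpos
    simp at hpos
  have hmem : coreNumber G r s (Rseq i) ∈ Kset (Rseq i) := by
    rw [hcore]; exact Nat.sSup_mem hne (hbdd _ hRi)
  set c := coreNumber G r s (Rseq i) with hc
  obtain ⟨hc1, 𝒮, h𝒮s, ⟨S0, hS0, hRiS0⟩, hcov⟩ := hmem
  -- the set of indices whose clique is covered by 𝒮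
  set I : Finset (Fin N) := Finset.univ.filter (fun k => ∃ S ∈ 𝒮, Rseq k ⊆ S) with hI
  have hiI : i ∈ I := by
    rw [hI, Finset.mem_filter]; exact ⟨Finset.mem_univ _, S0, hS0, hRiS0⟩
  set m : Fin N := I.min' ⟨i, hiI⟩ with hmdef
  have hmI : m ∈ I := Finset.min'_mem _ _
  have hmi : m ≤ i := Finset.min'_le _ _ hiI
  set P : Finset (Finset V) := peeledBefore Rseq m with hP
  -- no member of 𝒮 contains a peeled clique
  have hres : ∀ S ∈ 𝒮, ∀ Q ∈ P, ¬ Q ⊆ S := by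
    intro S hS Q hQ hQS
    rw [hP, peeledBefore, Finset.mem_image] at hQ
    obtain ⟨k, hk, hkQ⟩ := hQ
    rw [Finset.mem_Iio] at hk
    have hkI : k ∈ I := by
      rw [hI, Finset.mem_filter]
      exact ⟨Finset.mem_univ _, S, hS, hkQ ▸ hQS⟩
    exact absurd (Finset.min'_le _ _ hkI) (not_le.2 hk)
  have hRm : Rseq m ∈ G.cliqueFinset r := (hall _).2 ⟨m, rfl⟩
  have hmcov : ∃ S ∈ 𝒮, Rseq m ⊆ S := by
    rw [hI, Finset.mem_filter] at hmI; exact hmI.2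
  -- c ≤ residual degree of Rseq m
  have hcRm : c ≤ residualDeg G s P (Rseq m) := by
    unfold residualDeg
    refine le_trans (hcov _ hRm hmcov) (Finset.card_le_card ?_)
    intro S hS
    rw [Finset.mem_filter] at hS ⊢
    exact ⟨h𝒮s _ hS.1, hS.2, hres _ hS.1⟩
  -- Rseq j is not peeled before m
  have hnotmem : ∀ k : Fin N, m ≤ k → Rseq k ∉ P := by
    intro k hk hmem
    rw [hP, peeledBefore, Finset.mem_image] at hmem
    obtain ⟨l, hl, hlk⟩ := hmem
    rw [Finset.mem_Iio] at hl
    exact absurd (hinj hlk ▸ hl) (not_lt.2 hk)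
  have hjP : Rseq j ∉ P := hnotmem j (le_trans hmi hij)
  have hcRj : c ≤ residualDeg G s P (Rseq j) :=
    le_trans hcRm (hmin m _ hRj hjP)
  -- the witness for Rseq j : all residual s-cliques at step m
  set 𝒮' : Finset (Finset V) :=
    (G.cliqueFinset s).filter (fun S => ∀ Q ∈ P, ¬ Q ⊆ S) with h𝒮'
  have hfilter : ∀ R' : Finset V,
      residualDeg G s P R' = (𝒮'.filter (fun S => R' ⊆ S)).card := by
    intro R'
    unfold residualDeg
    rw [h𝒮', Finset.filter_filter]
    congr 1
    apply Finset.filter_congr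
    intro S _
    simp [and_comm]
  have hmemj : c ∈ Kset (Rseq j) := by
    refine ⟨hc1, 𝒮', ?_, ?_, ?_⟩
    · intro S hS
      rw [h𝒮', Finset.mem_filter] at hS
      exact hS.1
    · have hpos' : 0 < (𝒮'.filter (fun S => Rseq j ⊆ S)).card := by
        rw [← hfilter]; exact lt_of_lt_of_le hc1 hcRj
      obtain ⟨S, hS⟩ := Finset.card_pos.1 hpos'
      rw [Finset.mem_filter] at hS
      exact ⟨S, hS.1, hS.2⟩
    · intro R' hR' ⟨S, hS, hRS⟩
      have hR'P : R' ∉ P := by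
        intro hmem
        rw [h𝒮', Finset.mem_filter] at hS
        exact hS.2 R' hmem hRS
      rw [← hfilter]
      exact le_trans hcRm (hmin m R' hR' hR'P)
  rw [hcore (Rseq j)]
  exact le_csSup (hbdd _ hRj) hmemj
end

section
/- Let ℓ ≥ 0 and δ > 0 be real numbers, let C(s,r) denote the binomial coefficient s choose r, and let P be a finite set of r-cliques of G. Define P' = P ∪ { R an r-clique of G, R ∉ P : the residual s-clique-degree of R with respect to P is at most ℓ · (C(s,r) + δ) }. Then the number of r-cliques not in P' with (r,s)-clique core number at most ℓ is at most (C(s,r) / (C(s,r) + δ)) times the number of r-cliques not in P with (r,s)-clique core number at most ℓ; that is, one round of peeling all r-cliques with residual s-clique-degree at most ℓ(C(s,r)+δ) shrinks the set of remaining r-cliques with core number at most ℓ by a factor of at least (C(s,r)+δ)/C(s,r). -/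
open Finset

variable {V : Type*}

def coreSet [Fintype V] [DecidableEq V] (G : SimpleGraph V)
    [DecidableRel G.Adj] (r s : ℕ) (R : Finset V) : Set ℕ :=
  {c : ℕ | 1 ≤ c ∧ ∃ 𝒮 : Finset (Finset V),
    (∀ S ∈ 𝒮, S ∈ G.cliqueFinset s) ∧ (∃ S ∈ 𝒮, R ⊆ S) ∧
    ∀ R' ∈ G.cliqueFinset r, (∃ S ∈ 𝒮, R' ⊆ S) →
      c ≤ (𝒮.filter (fun S => R' ⊆ S)).card}



lemma coreNumber_eq_sSup [Fintype V] [DecidableEq V] (G : SimpleGraph V)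
    [DecidableRel G.Adj] (r s : ℕ) (R : Finset V) :
    coreNumber G r s R = sSup (coreSet G r s R) := rfl

lemma coreSet_le [Fintype V] [DecidableEq V] (G : SimpleGraph V)
    [DecidableRel G.Adj] {r s : ℕ} (hrs : r ≤ s) {R : Finset V} {c : ℕ}
    (h : c ∈ coreSet G r s R) : c ≤ (G.cliqueFinset s).card := by
  obtain ⟨h1, 𝒮, hcl, ⟨S, hS, hRS⟩, hcov⟩ := h
  have hSc := SimpleGraph.mem_cliqueFinset_iff.mp (hcl S hS)
  obtain ⟨R', hR'S, hR'card⟩ := Finset.exists_subset_card_eq (by rw [hSc.2]; exact hrs : r ≤ S.card)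
  have hR' : R' ∈ G.cliqueFinset r :=
    SimpleGraph.mem_cliqueFinset_iff.mpr ⟨hSc.1.subset hR'S, hR'card⟩
  calc c ≤ (𝒮.filter (fun S => R' ⊆ S)).card := hcov R' hR' ⟨S, hS, hR'S⟩
    _ ≤ 𝒮.card := Finset.card_filter_le _ _
    _ ≤ (G.cliqueFinset s).card := Finset.card_le_card (fun x hx => hcl x hx)

lemma coreSet_bddAbove [Fintype V] [DecidableEq V] (G : SimpleGraph V)
    [DecidableRel G.Adj] {r s : ℕ} (hrs : r ≤ s) (R : Finset V) :
    BddAbove (coreSet G r s R) :=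
  ⟨(G.cliqueFinset s).card, fun _ hx => coreSet_le G hrs hx⟩

lemma le_coreNumber [Fintype V] [DecidableEq V] (G : SimpleGraph V)
    [DecidableRel G.Adj] {r s : ℕ} (hrs : r ≤ s) {R : Finset V} {c : ℕ}
    (h : c ∈ coreSet G r s R) : c ≤ coreNumber G r s R :=
  le_csSup (coreSet_bddAbove G hrs R) h

lemma mem_coreSet_of_le [Fintype V] [DecidableEq V] (G : SimpleGraph V)
    [DecidableRel G.Adj] {r s : ℕ} (hrs : r ≤ s) {R : Finset V} {c : ℕ}
    (h1 : 1 ≤ c) (h2 : c ≤ coreNumber G r s R) : c ∈ coreSet G r s R := by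
  have hne : (coreSet G r s R).Nonempty := by
    by_contra h
    rw [Set.not_nonempty_iff_eq_empty] at h
    rw [coreNumber_eq_sSup, h, csSup_empty] at h2
    simp at h2
    omega
  obtain ⟨h1', 𝒮, hcl, hex, hcov⟩ := Nat.sSup_mem hne (coreSet_bddAbove G hrs R)
  exact ⟨h1, 𝒮, hcl, hex, fun R' hR' hc => le_trans h2 (hcov R' hR' hc)⟩

lemma peel_bound [Fintype V] [DecidableEq V] (G : SimpleGraph V) [DecidableRel G.Adj]
    (r s : ℕ) (hrs : r < s) (ℓ : ℝ) (hℓ : 0 ≤ ℓ)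
    (P B : Finset (Finset V))
    (hB : ∀ R ∈ B, R ∈ G.cliqueFinset r ∧ R ∉ P ∧ (coreNumber G r s R : ℝ) ≤ ℓ) :
    ∀ T : Finset (Finset V),
      T ⊆ (G.cliqueFinset s).filter (fun S => ∀ Q ∈ P, ¬ Q ⊆ S) →
      (∀ S ∈ T, ∃ R ∈ B, R ⊆ S) →
      T.card ≤ ⌊ℓ⌋₊ * ((G.cliqueFinset r).filter
        (fun R => R ∉ P ∧ (coreNumber G r s R : ℝ) ≤ ℓ ∧ ∃ S ∈ T, R ⊆ S)).card := by
  classical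
  intro T
  induction T using Finset.strongInduction with
  | _ T IH =>
  intro hTW hTB
  rcases Finset.eq_empty_or_nonempty T with hTe | ⟨S₀, hS₀⟩
  · simp [hTe]
  obtain ⟨R₀, hR₀B, hR₀S₀⟩ := hTB S₀ hS₀
  set n := ⌊ℓ⌋₊ with hn
  set c := n + 1 with hc
  have hclaim : ∃ R' ∈ G.cliqueFinset r, R' ∉ P ∧ (coreNumber G r s R' : ℝ) ≤ ℓ ∧
      (∃ S ∈ T, R' ⊆ S) ∧ (T.filter (fun S => R' ⊆ S)).card ≤ n := by
    by_contra hcon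
    push_neg at hcon
    -- build an auxiliary witness family
    set F : Finset V → Finset (Finset V) := fun R'' =>
      if h : c ∈ coreSet G r s R'' then h.2.choose else ∅ with hF
    have hFspec : ∀ R'', c ∈ coreSet G r s R'' →
        (∀ S ∈ F R'', S ∈ G.cliqueFinset s) ∧ (∃ S ∈ F R'', R'' ⊆ S) ∧
        ∀ R' ∈ G.cliqueFinset r, (∃ S ∈ F R'', R' ⊆ S) →
          c ≤ ((F R'').filter (fun S => R' ⊆ S)).card := by
      intro R'' h
      simp only [hF, dif_pos h]
      exact h.2.choose_spec
    set K' := (G.cliqueFinset r).filter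
      (fun R'' => (∃ S ∈ T, R'' ⊆ S) ∧ ¬ ((coreNumber G r s R'' : ℝ) ≤ ℓ)) with hK'
    have hK'core : ∀ R'' ∈ K', c ∈ coreSet G r s R'' := by
      intro R'' h
      rw [hK', Finset.mem_filter] at h
      have h1 : ℓ < (coreNumber G r s R'' : ℝ) := lt_of_not_ge h.2.2
      have h2 : n < coreNumber G r s R'' := (Nat.floor_lt hℓ).mpr (by exact_mod_cast h1)
      exact mem_coreSet_of_le G (le_of_lt hrs) (by omega) (by omega)
    set 𝒮 := T ∪ K'.biUnion F with h𝒮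
    have hsub𝒮 : ∀ R'' ∈ K', F R'' ⊆ 𝒮 := fun R'' h =>
      (Finset.subset_biUnion_of_mem F h).trans Finset.subset_union_right
    have hmem : c ∈ coreSet G r s R₀ := by
      refine ⟨by omega, 𝒮, ?_, ⟨S₀, Finset.mem_union_left _ hS₀, hR₀S₀⟩, ?_⟩
      · intro S hS
        rcases Finset.mem_union.mp hS with h | h
        · exact (Finset.mem_filter.mp (hTW h)).1
        · obtain ⟨R'', hR'', hSR''⟩ := Finset.mem_biUnion.mp h
          exact (hFspec R'' (hK'core R'' hR'')).1 S hSR''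
      · rintro R' hR' ⟨S, hS𝒮, hR'S⟩
        rcases Finset.mem_union.mp hS𝒮 with hST | hSb
        · by_cases hcore : (coreNumber G r s R' : ℝ) ≤ ℓ
          · have hR'P : R' ∉ P := fun hmem' =>
              (Finset.mem_filter.mp (hTW hST)).2 R' hmem' hR'S
            have hcc := hcon R' hR' hR'P hcore ⟨S, hST, hR'S⟩
            calc c ≤ (T.filter (fun S => R' ⊆ S)).card := hcc
              _ ≤ (𝒮.filter (fun S => R' ⊆ S)).card :=
                  Finset.card_le_card
                    (Finset.filter_subset_filter _ Finset.subset_union_left)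
          · have hK : R' ∈ K' := Finset.mem_filter.mpr ⟨hR', ⟨S, hST, hR'S⟩, hcore⟩
            obtain ⟨_, ⟨S', hS', hR'S'⟩, hall⟩ := hFspec R' (hK'core R' hK)
            calc c ≤ ((F R').filter (fun S => R' ⊆ S)).card := hall R' hR' ⟨S', hS', hR'S'⟩
              _ ≤ (𝒮.filter (fun S => R' ⊆ S)).card :=
                  Finset.card_le_card (Finset.filter_subset_filter _ (hsub𝒮 R' hK))
        · obtain ⟨R'', hR''K, hSF⟩ := Finset.mem_biUnion.mp hSb
          obtain ⟨_, _, hall⟩ := hFspec R'' (hK'core R'' hR''K)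
          calc c ≤ ((F R'').filter (fun S => R' ⊆ S)).card := hall R' hR' ⟨S, hSF, hR'S⟩
            _ ≤ (𝒮.filter (fun S => R' ⊆ S)).card :=
                Finset.card_le_card (Finset.filter_subset_filter _ (hsub𝒮 R'' hR''K))
    have h1 : c ≤ coreNumber G r s R₀ := le_coreNumber G (le_of_lt hrs) hmem
    have h2 : coreNumber G r s R₀ ≤ n := Nat.le_floor (hB R₀ hR₀B).2.2
    omega
  obtain ⟨R', hR'cl, hR'P, hR'core, ⟨S', hS'T, hR'S'⟩, hcov⟩ := hclaim
  set T' := T.filter (fun S => ¬ R' ⊆ S) with hT'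
  have hT'ss : T' ⊂ T := Finset.filter_ssubset.mpr ⟨S', hS'T, by simp [hR'S']⟩
  have hIH := IH T' hT'ss ((Finset.filter_subset _ _).trans hTW)
    (fun S h => hTB S (Finset.filter_subset _ _ h))
  have hsplit : (T.filter (fun S => R' ⊆ S)).card + T'.card = T.card :=
    Finset.card_filter_add_card_filter_not _
  have hDss : ((G.cliqueFinset r).filter
        (fun R => R ∉ P ∧ (coreNumber G r s R : ℝ) ≤ ℓ ∧ ∃ S ∈ T', R ⊆ S)).card + 1 ≤
      ((G.cliqueFinset r).filter
        (fun R => R ∉ P ∧ (coreNumber G r s R : ℝ) ≤ ℓ ∧ ∃ S ∈ T, R ⊆ S)).card := by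
    have hsub : (G.cliqueFinset r).filter
        (fun R => R ∉ P ∧ (coreNumber G r s R : ℝ) ≤ ℓ ∧ ∃ S ∈ T', R ⊆ S) ⊆
        (G.cliqueFinset r).filter
        (fun R => R ∉ P ∧ (coreNumber G r s R : ℝ) ≤ ℓ ∧ ∃ S ∈ T, R ⊆ S) := by
      intro R hR
      rw [Finset.mem_filter] at hR ⊢
      obtain ⟨h1, h2, h3, S, hS, hRS⟩ := hR
      exact ⟨h1, h2, h3, S, Finset.filter_subset _ _ hS, hRS⟩
    have hlt : (G.cliqueFinset r).filter
        (fun R => R ∉ P ∧ (coreNumber G r s R : ℝ) ≤ ℓ ∧ ∃ S ∈ T', R ⊆ S) ⊂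
        (G.cliqueFinset r).filter
        (fun R => R ∉ P ∧ (coreNumber G r s R : ℝ) ≤ ℓ ∧ ∃ S ∈ T, R ⊆ S) := by
      refine (Finset.ssubset_iff_of_subset hsub).mpr ⟨R', ?_, ?_⟩
      · exact Finset.mem_filter.mpr ⟨hR'cl, hR'P, hR'core, S', hS'T, hR'S'⟩
      · intro hmem'
        obtain ⟨_, _, _, S, hS, hRS⟩ := Finset.mem_filter.mp hmem'
        exact (Finset.mem_filter.mp hS).2 hRS
    exact Finset.card_lt_card hlt
  calc T.card = (T.filter (fun S => R' ⊆ S)).card + T'.card := hsplit.symm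
    _ ≤ n + n * ((G.cliqueFinset r).filter
        (fun R => R ∉ P ∧ (coreNumber G r s R : ℝ) ≤ ℓ ∧ ∃ S ∈ T', R ⊆ S)).card :=
          add_le_add hcov hIH
    _ ≤ n * ((G.cliqueFinset r).filter
        (fun R => R ∉ P ∧ (coreNumber G r s R : ℝ) ≤ ℓ ∧ ∃ S ∈ T, R ⊆ S)).card := by
        have := hDss
        nlinarith [hDss]

/-- Let `ℓ ≥ 0`, `δ > 0`, and let `P` be a finite set of `r`-cliques of `G`. Letting `P'` be
`P` together with all `r`-cliques not in `P` whose residual `s`-clique-degree with respect to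
`P` is at most `ℓ * (C(s,r) + δ)`, the number of `r`-cliques not in `P'` with core number at
most `ℓ` is at most `C(s,r) / (C(s,r) + δ)` times the number of `r`-cliques not in `P` with
core number at most `ℓ`. -/
theorem stmt9 [Fintype V] [DecidableEq V] (G : SimpleGraph V) [DecidableRel G.Adj]
    (r s : ℕ) (hr : 1 ≤ r) (hrs : r < s)
    (ℓ : ℝ) (hℓ : 0 ≤ ℓ) (δ : ℝ) (hδ : 0 < δ)
    (P : Finset (Finset V)) (hP : ∀ Q ∈ P, Q ∈ G.cliqueFinset r)
    (P' : Finset (Finset V))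
    (hP' : P' = P ∪ (G.cliqueFinset r).filter
      (fun R => R ∉ P ∧ (residualDeg G s P R : ℝ) ≤ ℓ * ((s.choose r : ℝ) + δ))) :
    ((((G.cliqueFinset r).filter
        (fun R => R ∉ P' ∧ (coreNumber G r s R : ℝ) ≤ ℓ)).card : ℝ))
      ≤ ((s.choose r : ℝ) / ((s.choose r : ℝ) + δ))
        * (((G.cliqueFinset r).filter
            (fun R => R ∉ P ∧ (coreNumber G r s R : ℝ) ≤ ℓ)).card : ℝ) := by
  set A := (G.cliqueFinset r).filter
    (fun R => R ∉ P ∧ (coreNumber G r s R : ℝ) ≤ ℓ) with hA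
  set B := (G.cliqueFinset r).filter
    (fun R => R ∉ P' ∧ (coreNumber G r s R : ℝ) ≤ ℓ) with hB
  classical
  have hPP' : P ⊆ P' := by rw [hP']; exact Finset.subset_union_left
  have hBmem : ∀ R ∈ B, R ∈ G.cliqueFinset r ∧ R ∉ P ∧ (coreNumber G r s R : ℝ) ≤ ℓ ∧
      ℓ * ((s.choose r : ℝ) + δ) < (residualDeg G s P R : ℝ) := by
    intro R hR
    rw [hB, Finset.mem_filter] at hR
    obtain ⟨hcl, hP'R, hcore⟩ := hR
    have hPn : R ∉ P := fun h => hP'R (hPP' h)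
    refine ⟨hcl, hPn, hcore, ?_⟩
    by_contra hle
    push_neg at hle
    exact hP'R (by
      rw [hP']
      exact Finset.mem_union_right _ (Finset.mem_filter.mpr ⟨hcl, hPn, hle⟩))
  have hBA : B ⊆ A := by
    intro R hR
    obtain ⟨h1, h2, h3, _⟩ := hBmem R hR
    rw [hA, Finset.mem_filter]
    exact ⟨h1, h2, h3⟩
  have hCpos : (0:ℝ) < (s.choose r : ℝ) + δ := by positivity
  rcases Finset.eq_empty_or_nonempty B with hBe | hBne
  · rw [hBe]
    simp only [Finset.card_empty, Nat.cast_zero]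
    positivity
  set W := (G.cliqueFinset s).filter (fun S => ∀ Q ∈ P, ¬ Q ⊆ S) with hW
  have hres : ∀ R : Finset V, residualDeg G s P R = (W.filter (fun S => R ⊆ S)).card := by
    intro R
    rw [residualDeg, hW, Finset.filter_filter]
    apply congrArg Finset.card
    apply Finset.filter_congr
    intro S _
    constructor
    · intro h; exact ⟨h.2, h.1⟩
    · intro h; exact ⟨h.2, h.1⟩
  have hdc : ∑ R ∈ B, (W.filter (fun S => R ⊆ S)).card
      = ∑ S ∈ W, (B.filter (fun R => R ⊆ S)).card := by
    simp_rw [Finset.card_filter]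
    exact Finset.sum_comm
  set WB := W.filter (fun S => ∃ R ∈ B, R ⊆ S) with hWB
  have hsum2 : ∑ S ∈ W, (B.filter (fun R => R ⊆ S)).card ≤ WB.card * s.choose r := by
    have hzero : ∀ S ∈ W, S ∉ WB → (B.filter (fun R => R ⊆ S)).card = 0 := by
      intro S hSW hSnot
      rw [Finset.card_eq_zero, Finset.filter_eq_empty_iff]
      intro R hR hRS
      exact hSnot (Finset.mem_filter.mpr ⟨hSW, R, hR, hRS⟩)
    rw [← Finset.sum_subset (Finset.filter_subset _ _) hzero]
    have hbd : ∀ S ∈ WB, (B.filter (fun R => R ⊆ S)).card ≤ s.choose r := by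
      intro S hS
      have hSW : S ∈ W := Finset.filter_subset _ _ hS
      have hSc := SimpleGraph.mem_cliqueFinset_iff.mp (Finset.mem_filter.mp hSW).1
      have hsub : B.filter (fun R => R ⊆ S) ⊆ S.powersetCard r := by
        intro R hR
        rw [Finset.mem_filter] at hR
        have hRcl := SimpleGraph.mem_cliqueFinset_iff.mp (hBmem R hR.1).1
        exact Finset.mem_powersetCard.mpr ⟨hR.2, hRcl.2⟩
      calc (B.filter (fun R => R ⊆ S)).card ≤ (S.powersetCard r).card :=
            Finset.card_le_card hsub
        _ = s.choose r := by rw [Finset.card_powersetCard, hSc.2]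
    calc ∑ S ∈ WB, (B.filter (fun R => R ⊆ S)).card ≤ ∑ _S ∈ WB, s.choose r :=
          Finset.sum_le_sum hbd
      _ = WB.card * s.choose r := by rw [Finset.sum_const, smul_eq_mul]
  have hpeel := peel_bound G r s hrs ℓ hℓ P B
    (fun R hR => ⟨(hBmem R hR).1, (hBmem R hR).2.1, (hBmem R hR).2.2.1⟩)
    WB (Finset.filter_subset _ _) (fun S hS => (Finset.mem_filter.mp hS).2)
  have hDA : ((G.cliqueFinset r).filter
      (fun R => R ∉ P ∧ (coreNumber G r s R : ℝ) ≤ ℓ ∧ ∃ S ∈ WB, R ⊆ S)).card ≤ A.card := by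
    apply Finset.card_le_card
    intro R hR
    rw [Finset.mem_filter] at hR
    rw [hA, Finset.mem_filter]
    exact ⟨hR.1, hR.2.1, hR.2.2.1⟩
  have hnat : ∑ R ∈ B, residualDeg G s P R ≤ ⌊ℓ⌋₊ * A.card * s.choose r := by
    calc ∑ R ∈ B, residualDeg G s P R
        = ∑ S ∈ W, (B.filter (fun R => R ⊆ S)).card := by
          rw [Finset.sum_congr rfl (fun R _ => hres R)]; exact hdc
      _ ≤ WB.card * s.choose r := hsum2
      _ ≤ ⌊ℓ⌋₊ * A.card * s.choose r := by
          have h2 := le_trans hpeel (Nat.mul_le_mul_left _ hDA)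
          exact Nat.mul_le_mul_right _ h2
  have hstrict : (B.card : ℝ) * (ℓ * ((s.choose r : ℝ) + δ))
      < ∑ R ∈ B, (residualDeg G s P R : ℝ) := by
    have h := Finset.sum_lt_sum_of_nonempty hBne
      (f := fun _ => ℓ * ((s.choose r : ℝ) + δ))
      (g := fun R => (residualDeg G s P R : ℝ))
      (fun R hR => (hBmem R hR).2.2.2)
    simpa [Finset.sum_const, nsmul_eq_mul] using h
  have hreal : (B.card : ℝ) * (ℓ * ((s.choose r : ℝ) + δ))
      < ℓ * A.card * s.choose r := by
    calc (B.card : ℝ) * (ℓ * ((s.choose r : ℝ) + δ))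
        < ∑ R ∈ B, (residualDeg G s P R : ℝ) := hstrict
      _ = ((∑ R ∈ B, residualDeg G s P R : ℕ) : ℝ) := by push_cast; ring
      _ ≤ ((⌊ℓ⌋₊ * A.card * s.choose r : ℕ) : ℝ) := Nat.cast_le.mpr hnat
      _ ≤ ℓ * A.card * s.choose r := by
          push_cast
          gcongr
          exact Nat.floor_le hℓ
  rcases eq_or_lt_of_le hℓ with hl0 | hlpos
  · exfalso
    rw [← hl0] at hreal
    simp at hreal
  · rw [div_mul_eq_mul_div, le_div_iff₀ hCpos]
    have h2 : (B.card : ℝ) * ((s.choose r : ℝ) + δ) < (s.choose r : ℝ) * A.card := by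
      have h3 : ((B.card : ℝ) * ((s.choose r : ℝ) + δ)) * ℓ
          < ((s.choose r : ℝ) * A.card) * ℓ := by ring_nf; ring_nf at hreal; linarith
      exact lt_of_mul_lt_mul_right h3 (le_of_lt hlpos)
    linarith
end

section
/- Let ℓ ≥ 0 and δ > 0 be real numbers, let C(s,r) denote the binomial coefficient s choose r, and let n_r denote the total number of r-cliques of G. Starting from any finite set P_0 of r-cliques of G, define inductively P_{j+1} = P_j ∪ { R an r-clique of G, R ∉ P_j : the residual s-clique-degree of R with respect to P_j is at most ℓ · (C(s,r) + δ) }. Then for every natural number t with (1 + δ/C(s,r))^t > n_r, every r-clique of G with (r,s)-clique core number at most ℓ belongs to P_t; that is, after logarithmically many (in n_r, with base 1 + δ/C(s,r)) rounds of peeling at threshold ℓ(C(s,r)+δ), no r-clique with core number at most ℓ remains unpeeled. -/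
open Finset

variable {V : Type*}

/-- One round of peeling at threshold `ℓ * (C(s,r) + δ)`: add to `P` all `r`-cliques not in
`P` whose residual `s`-clique-degree with respect to `P` is at most `ℓ * (C(s,r) + δ)`. -/
noncomputable def peelStep [Fintype V] [DecidableEq V] (G : SimpleGraph V)
    [DecidableRel G.Adj] (r s : ℕ) (ℓ δ : ℝ) (P : Finset (Finset V)) : Finset (Finset V) :=
  P ∪ (G.cliqueFinset r).filter
    (fun R => R ∉ P ∧ (residualDeg G s P R : ℝ) ≤ ℓ * ((s.choose r : ℝ) + δ))

section Stmt10Aux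

variable [DecidableEq V]

/-- The number of members of a family `𝒮` containing `R`. -/
def adeg (𝒮 : Finset (Finset V)) (R : Finset V) : ℕ := (𝒮.filter (fun S => R ⊆ S)).card

/-- A family `𝒮` is good if every member of `K` covered by `𝒮` has degree at least `L+1`. -/
def agood (L : ℕ) (K 𝒮 : Finset (Finset V)) : Prop :=
  ∀ R ∈ K, (∃ S ∈ 𝒮, R ⊆ S) → L + 1 ≤ adeg 𝒮 R

open scoped Classical in
/-- The union of all good subfamilies of `E`. -/
noncomputable def corefam (L : ℕ) (K E : Finset (Finset V)) : Finset (Finset V) :=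
  E.filter (fun S => ∃ 𝒮 ∈ E.powerset, agood L K 𝒮 ∧ S ∈ 𝒮)

lemma adeg_mono {𝒮 𝒯 : Finset (Finset V)} (h : 𝒮 ⊆ 𝒯) (R : Finset V) :
    adeg 𝒮 R ≤ adeg 𝒯 R :=
  Finset.card_le_card (Finset.filter_subset_filter _ h)

lemma corefam_subset (L : ℕ) (K E : Finset (Finset V)) : corefam L K E ⊆ E := by
  classical
  intro S hS
  rw [corefam, Finset.mem_filter] at hS
  exact hS.1

lemma mem_corefam_of_good {L : ℕ} {K E 𝒮 : Finset (Finset V)} (h𝒮 : 𝒮 ⊆ E)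
    (hg : agood L K 𝒮) {S : Finset V} (hS : S ∈ 𝒮) : S ∈ corefam L K E := by
  classical
  rw [corefam, Finset.mem_filter]
  exact ⟨h𝒮 hS, 𝒮, Finset.mem_powerset.mpr h𝒮, hg, hS⟩

lemma corefam_good (L : ℕ) (K E : Finset (Finset V)) : agood L K (corefam L K E) := by
  rintro R hRK ⟨S, hS, hRS⟩
  classical
  rw [corefam, Finset.mem_filter] at hS
  obtain ⟨hSE, 𝒮, h𝒮E, hg, hS𝒮⟩ := hS
  rw [Finset.mem_powerset] at h𝒮E
  have h1 : L + 1 ≤ adeg 𝒮 R := hg R hRK ⟨S, hS𝒮, hRS⟩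
  have h2 : 𝒮 ⊆ corefam L K E := fun T hT => mem_corefam_of_good h𝒮E hg hT
  exact h1.trans (adeg_mono h2 R)

lemma exists_peel (L : ℕ) (K E : Finset (Finset V)) :
    ∀ 𝒯 : Finset (Finset V), corefam L K E ⊆ 𝒯 → 𝒯 ⊆ E →
    ∃ W : Finset (Finset V), W ⊆ K ∧
      (∀ R ∈ W, ∀ S ∈ corefam L K E, ¬ R ⊆ S) ∧
      (∀ R ∈ W, ∃ S ∈ 𝒯, R ⊆ S) ∧
      ∀ P : Finset (Finset V),
        (𝒯.filter (fun S => S ∉ corefam L K E ∧ ∀ Q ∈ P, ¬ Q ⊆ S)).card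
          ≤ L * (W \ P).card := by
  classical
  intro 𝒯
  induction 𝒯 using Finset.strongInduction with
  | _ 𝒯 ih =>
    intro hC𝒯 h𝒯E
    by_cases h : ∃ R ∈ K, (∃ S ∈ 𝒯, R ⊆ S) ∧ adeg 𝒯 R ≤ L
    · obtain ⟨R₀, hR₀K, ⟨S₀, hS₀, hRS₀⟩, hdeg⟩ := h
      have hR₀C : ∀ S ∈ corefam L K E, ¬ R₀ ⊆ S := by
        intro S hS hsub
        have h1 := corefam_good L K E R₀ hR₀K ⟨S, hS, hsub⟩
        have h2 : adeg (corefam L K E) R₀ ≤ adeg 𝒯 R₀ := adeg_mono hC𝒯 R₀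
        omega
      set 𝒯' := 𝒯.filter (fun S => ¬ R₀ ⊆ S) with h𝒯'def
      have hss : 𝒯' ⊂ 𝒯 := by
        refine Finset.ssubset_iff_of_subset (Finset.filter_subset _ _) |>.mpr ?_
        exact ⟨S₀, hS₀, by simp [h𝒯'def, hRS₀]⟩
      have hC𝒯' : corefam L K E ⊆ 𝒯' := by
        intro S hS
        rw [h𝒯'def, Finset.mem_filter]
        exact ⟨hC𝒯 hS, hR₀C S hS⟩
      obtain ⟨W', hW'K, hW'C, hW'cov, hW'cnt⟩ :=
        ih 𝒯' hss hC𝒯' ((Finset.filter_subset _ _).trans h𝒯E)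
      have hR₀W' : R₀ ∉ W' := by
        intro hmem
        obtain ⟨S, hS, hsub⟩ := hW'cov R₀ hmem
        rw [h𝒯'def, Finset.mem_filter] at hS
        exact hS.2 hsub
      refine ⟨insert R₀ W', ?_, ?_, ?_, ?_⟩
      · intro R hR
        rcases Finset.mem_insert.mp hR with rfl | hR
        · exact hR₀K
        · exact hW'K hR
      · intro R hR
        rcases Finset.mem_insert.mp hR with rfl | hR
        · exact hR₀C
        · exact hW'C R hR
      · intro R hR
        rcases Finset.mem_insert.mp hR with rfl | hR
        · exact ⟨S₀, hS₀, hRS₀⟩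
        · obtain ⟨S, hS, hsub⟩ := hW'cov R hR
          exact ⟨S, (Finset.filter_subset _ _) hS, hsub⟩
      · intro P
        have hsplit : 𝒯.filter (fun S => S ∉ corefam L K E ∧ ∀ Q ∈ P, ¬ Q ⊆ S)
            ⊆ (𝒯'.filter (fun S => S ∉ corefam L K E ∧ ∀ Q ∈ P, ¬ Q ⊆ S))
              ∪ (𝒯.filter (fun S => R₀ ⊆ S ∧ ∀ Q ∈ P, ¬ Q ⊆ S)) := by
          intro S hS
          rw [Finset.mem_filter] at hS
          by_cases hsub : R₀ ⊆ S
          · exact Finset.mem_union_right _ (Finset.mem_filter.mpr ⟨hS.1, hsub, hS.2.2⟩)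
          · refine Finset.mem_union_left _ (Finset.mem_filter.mpr ⟨?_, hS.2⟩)
            rw [h𝒯'def, Finset.mem_filter]
            exact ⟨hS.1, hsub⟩
        have hY : (𝒯.filter (fun S => R₀ ⊆ S ∧ ∀ Q ∈ P, ¬ Q ⊆ S)).card ≤ L := by
          refine le_trans (Finset.card_le_card ?_) hdeg
          intro S hS
          rw [Finset.mem_filter] at hS ⊢
          exact ⟨hS.1, hS.2.1⟩
        have hcard := (Finset.card_le_card hsplit).trans (Finset.card_union_le _ _)
        by_cases hP : R₀ ∈ P
        · have hY0 : (𝒯.filter (fun S => R₀ ⊆ S ∧ ∀ Q ∈ P, ¬ Q ⊆ S)).card = 0 := by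
            rw [Finset.card_eq_zero, Finset.filter_eq_empty_iff]
            rintro S _ ⟨hsub, hres⟩
            exact hres R₀ hP hsub
          have hWP : W' \ P ⊆ insert R₀ W' \ P := by
            intro x hx
            rw [Finset.mem_sdiff] at hx ⊢
            exact ⟨Finset.mem_insert_of_mem hx.1, hx.2⟩
          calc (𝒯.filter _).card ≤ _ + _ := hcard
            _ ≤ L * (W' \ P).card + 0 := by
                have := hW'cnt P
                omega
            _ ≤ L * ((insert R₀ W') \ P).card := by
                have := Finset.card_le_card hWP
                nlinarith [this]
        · have hins : ((insert R₀ W') \ P).card = (W' \ P).card + 1 := by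
            have : (insert R₀ W') \ P = insert R₀ (W' \ P) := by
              ext x
              simp only [Finset.mem_sdiff, Finset.mem_insert]
              constructor
              · rintro ⟨h1 | h1, h2⟩
                · exact Or.inl h1
                · exact Or.inr ⟨h1, h2⟩
              · rintro (rfl | ⟨h1, h2⟩)
                · exact ⟨Or.inl rfl, hP⟩
                · exact ⟨Or.inr h1, h2⟩
            rw [this, Finset.card_insert_of_notMem]
            rw [Finset.mem_sdiff]
            exact fun hc => hR₀W' hc.1
          calc (𝒯.filter _).card ≤ _ + _ := hcard
            _ ≤ L * (W' \ P).card + L := by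
                have := hW'cnt P
                omega
            _ = L * ((insert R₀ W') \ P).card := by rw [hins]; ring
    · push_neg at h
      have hgood : agood L K 𝒯 := by
        intro R hRK hcov
        have := h R hRK hcov
        omega
      refine ⟨∅, by simp, by simp, by simp, ?_⟩
      intro P
      have : (𝒯.filter (fun S => S ∉ corefam L K E ∧ ∀ Q ∈ P, ¬ Q ⊆ S)).card = 0 := by
        rw [Finset.card_eq_zero, Finset.filter_eq_empty_iff]
        rintro S hS ⟨hnC, _⟩
        exact hnC (mem_corefam_of_good h𝒯E hgood hS)
      omega

end Stmt10Aux

set_option maxHeartbeats 1000000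

/-- Starting from any finite set `P₀` of `r`-cliques of `G` and iterating rounds of peeling at
threshold `ℓ * (C(s,r) + δ)`, after any number `t` of rounds with
`(1 + δ/C(s,r))^t > n_r` (where `n_r` is the number of `r`-cliques of `G`), every `r`-clique
of `G` with `(r,s)`-clique core number at most `ℓ` has been peeled. -/
theorem stmt10 [Fintype V] [DecidableEq V] (G : SimpleGraph V) [DecidableRel G.Adj]
    (r s : ℕ) (hr : 1 ≤ r) (hrs : r < s)
    (ℓ : ℝ) (hℓ : 0 ≤ ℓ) (δ : ℝ) (hδ : 0 < δ)
    (P₀ : Finset (Finset V)) (hP₀ : ∀ Q ∈ P₀, Q ∈ G.cliqueFinset r)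
    (t : ℕ) (ht : ((G.cliqueFinset r).card : ℝ) < (1 + δ / (s.choose r : ℝ)) ^ t) :
    ∀ R ∈ G.cliqueFinset r, (coreNumber G r s R : ℝ) ≤ ℓ →
      R ∈ (peelStep G r s ℓ δ)^[t] P₀ := by
  classical
  intro R hR hcore
  by_contra hRP
  -- basic notation
  set K := G.cliqueFinset r with hK
  set E := G.cliqueFinset s with hE
  set L := ⌊ℓ⌋₊ with hL
  set 𝒞 := corefam L K E with h𝒞
  set thr := ℓ * ((s.choose r : ℝ) + δ) with hthr
  set β : ℝ := 1 + δ / (s.choose r : ℝ) with hβ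
  have hCpos : (0 : ℝ) < (s.choose r : ℝ) := by
    exact_mod_cast Nat.choose_pos hrs.le
  have hβ1 : 1 < β := by
    rw [hβ]
    nlinarith [div_pos hδ hCpos]
  have hβ0 : 0 < β := lt_trans one_pos hβ1
  have hCβ : (s.choose r : ℝ) * β = (s.choose r : ℝ) + δ := by
    rw [hβ]
    field_simp
  have hthr0 : 0 ≤ thr := by
    rw [hthr]
    have : (0:ℝ) ≤ (s.choose r : ℝ) + δ := by positivity
    exact mul_nonneg hℓ this
  -- t ≥ 1
  obtain ⟨u, rfl⟩ : ∃ u, t = u + 1 := by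
    cases t with
    | zero =>
      exfalso
      rw [pow_zero] at ht
      have h0 : K.card < 1 := by exact_mod_cast ht
      have h1 : K = ∅ := Finset.card_eq_zero.mp (by omega)
      rw [h1] at hR
      exact absurd hR (Finset.notMem_empty R)
    | succ u => exact ⟨u, rfl⟩
  -- R is not covered by the core family
  have hRnC : ∀ S ∈ 𝒞, ¬ R ⊆ S := by
    intro S hS hsub
    have hle : (L + 1 : ℕ) ≤ coreNumber G r s R := by
      rw [coreNumber]
      apply le_csSup
      · refine ⟨E.card, ?_⟩
        rintro c ⟨hc1, 𝒮, h𝒮, ⟨S', hS', hRS'⟩, hall⟩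
        calc c ≤ ((𝒮.filter (fun S => R ⊆ S)).card) := hall R hR ⟨S', hS', hRS'⟩
          _ ≤ 𝒮.card := Finset.card_le_card (Finset.filter_subset _ _)
          _ ≤ E.card := Finset.card_le_card (fun T hT => h𝒮 T hT)
      · refine ⟨by omega, 𝒞, fun T hT => corefam_subset L K E hT, ⟨S, hS, hsub⟩, ?_⟩
        intro R' hR' hcov
        exact corefam_good L K E R' hR' hcov
    have h1 : ((L : ℝ) + 1) ≤ (coreNumber G r s R : ℝ) := by exact_mod_cast hle
    have h2 : ℓ < (L : ℝ) + 1 := by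
      rw [hL]
      exact Nat.lt_floor_add_one ℓ
    linarith
  -- the peeling witness set
  obtain ⟨W, hWK, hWC, hWcov, hWcnt⟩ :=
    exists_peel L K E E (corefam_subset L K E) (Finset.Subset.refl E)
  rw [← h𝒞] at hWC hWcnt
  -- iterates
  set Pj : ℕ → Finset (Finset V) := fun j => (peelStep G r s ℓ δ)^[j] P₀ with hPjdef
  have hPstep : ∀ j, Pj (j + 1) = peelStep G r s ℓ δ (Pj j) := by
    intro j
    simp only [hPjdef]
    rw [Function.iterate_succ_apply']
  have hPmono : ∀ j, Pj j ⊆ Pj (j + 1) := by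
    intro j
    rw [hPstep, peelStep]
    exact Finset.subset_union_left
  have hPmono' : ∀ {j k : ℕ}, j ≤ k → Pj j ⊆ Pj k := by
    intro j k hjk
    induction k, hjk using Nat.le_induction with
    | base => exact Finset.Subset.refl _
    | succ k hjk ih => exact ih.trans (hPmono k)
  -- survival: unpeeled r-cliques have large residual degree
  have hsurv : ∀ (j : ℕ) (R' : Finset V), R' ∈ K → R' ∉ Pj (j + 1) →
      thr < (residualDeg G s (Pj j) R' : ℝ) := by
    intro j R' hK' hnot
    rw [hPstep, peelStep, Finset.mem_union] at hnot
    push_neg at hnot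
    obtain ⟨hnP, hnF⟩ := hnot
    rw [Finset.mem_filter] at hnF
    push_neg at hnF
    rw [hthr]
    exact hnF hK' hnP
  have hM : ∀ (j : ℕ) (R' : Finset V), R' ∈ K → R' ∉ Pj (j + 1) →
      ⌊thr⌋₊ + 1 ≤ residualDeg G s (Pj j) R' := by
    intro j R' hK' hnot
    have h1 := hsurv j R' hK' hnot
    have h2 : ⌊thr⌋₊ < residualDeg G s (Pj j) R' := (Nat.floor_lt hthr0).mpr h1
    omega
  -- residual degree is bounded by the count of non-core residual s-cliques
  have hsub1 : ∀ (P : Finset (Finset V)) (R' : Finset V), (∀ S ∈ 𝒞, ¬ R' ⊆ S) →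
      residualDeg G s P R' ≤ L * (W \ P).card := by
    intro P R' hnC
    refine le_trans ?_ (hWcnt P)
    rw [residualDeg]
    apply Finset.card_le_card
    intro S hS
    simp only [Finset.mem_filter] at hS ⊢
    exact ⟨hS.1, fun hc => hnC S hc hS.2.1, hS.2.2⟩
  -- double counting
  have hdouble : ∀ (P : Finset (Finset V)) (A : Finset (Finset V)), A ⊆ W →
      (∑ R' ∈ A, residualDeg G s P R')
        ≤ s.choose r * (L * (W \ P).card) := by
    intro P A hAW
    have h1 : ∀ R' ∈ A, residualDeg G s P R'
        = ∑ S ∈ E, if R' ⊆ S ∧ ∀ Q ∈ P, ¬ Q ⊆ S then 1 else 0 := by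
      intro R' _
      rw [residualDeg, Finset.card_filter]
    rw [Finset.sum_congr rfl h1, Finset.sum_comm]
    have h2 : ∀ S ∈ E, (∑ R' ∈ A, if R' ⊆ S ∧ (∀ Q ∈ P, ¬ Q ⊆ S) then 1 else 0)
        ≤ if S ∉ 𝒞 ∧ (∀ Q ∈ P, ¬ Q ⊆ S) then s.choose r else 0 := by
      intro S hSE
      by_cases hcond : S ∉ 𝒞 ∧ (∀ Q ∈ P, ¬ Q ⊆ S)
      · rw [if_pos hcond]
        have hb1 : (∑ R' ∈ A, if R' ⊆ S ∧ (∀ Q ∈ P, ¬ Q ⊆ S) then 1 else 0)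
            ≤ (A.filter (fun R' => R' ⊆ S)).card := by
          rw [Finset.card_filter]
          refine Finset.sum_le_sum ?_
          intro R' _
          split
          · rename_i hc
            simp [hc.1]
          · exact Nat.zero_le _
        have hb2 : A.filter (fun R' => R' ⊆ S) ⊆ S.powersetCard r := by
          intro R' hR'
          rw [Finset.mem_filter] at hR'
          rw [Finset.mem_powersetCard]
          refine ⟨hR'.2, ?_⟩
          have hmem := hWK (hAW hR'.1)
          rw [hK, SimpleGraph.mem_cliqueFinset_iff] at hmem
          exact hmem.2
        have hb3 : (S.powersetCard r).card = s.choose r := by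
          rw [Finset.card_powersetCard]
          have hcs : S.card = s := by
            have h := hSE
            rw [hE, SimpleGraph.mem_cliqueFinset_iff] at h
            exact h.2
          rw [hcs]
        exact hb1.trans ((Finset.card_le_card hb2).trans_eq hb3)
      · rw [if_neg hcond]
        have hz : ∀ R' ∈ A, (if R' ⊆ S ∧ (∀ Q ∈ P, ¬ Q ⊆ S) then 1 else 0) = 0 := by
          intro R' hR'
          rw [ite_eq_right_iff]
          rintro ⟨hsub, hres⟩
          exfalso
          rcases not_and_or.mp hcond with hc | hc
          · exact hWC R' (hAW hR') S (not_not.mp hc) hsub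
          · exact hc hres
        rw [Finset.sum_congr rfl hz]
        simp
    calc (∑ S ∈ E, ∑ R' ∈ A, if R' ⊆ S ∧ (∀ Q ∈ P, ¬ Q ⊆ S) then 1 else 0)
        ≤ ∑ S ∈ E, if S ∉ 𝒞 ∧ (∀ Q ∈ P, ¬ Q ⊆ S) then s.choose r else 0 :=
          Finset.sum_le_sum h2
      _ = s.choose r * (E.filter (fun S => S ∉ 𝒞 ∧ ∀ Q ∈ P, ¬ Q ⊆ S)).card := by
          rw [← Finset.sum_filter, Finset.sum_const, smul_eq_mul, mul_comm]
      _ ≤ s.choose r * (L * (W \ P).card) := by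
          refine Nat.mul_le_mul_left _ (le_trans (Finset.card_le_card ?_) (hWcnt P))
          intro S hS
          simp only [Finset.mem_filter] at hS ⊢
          exact hS
  -- monotone counts
  have hwmono : ∀ {j k : ℕ}, j ≤ k → (W \ Pj k).card ≤ (W \ Pj j).card := by
    intro j k hjk
    exact Finset.card_le_card (Finset.sdiff_subset_sdiff (Finset.Subset.refl W) (hPmono' hjk))
  -- Step A
  have hRbound : ⌊thr⌋₊ + 1 ≤ L * (W \ Pj u).card := by
    have h1 := hM u R hR hRP
    have h2 := hsub1 (Pj u) R hRnC
    omega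
  -- Step B
  have hBj : ∀ j : ℕ, (W \ Pj (j + 1)).card * (⌊thr⌋₊ + 1)
      ≤ s.choose r * (L * (W \ Pj j).card) := by
    intro j
    have h1 : (W \ Pj (j + 1)).card • (⌊thr⌋₊ + 1)
        ≤ ∑ R' ∈ W \ Pj (j + 1), residualDeg G s (Pj j) R' := by
      refine Finset.card_nsmul_le_sum _ _ _ ?_
      intro R' hR'
      rw [Finset.mem_sdiff] at hR'
      exact hM j R' (hWK hR'.1) hR'.2
    have h2 := hdouble (Pj j) (W \ Pj (j + 1)) Finset.sdiff_subset
    rw [smul_eq_mul] at h1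
    omega
  -- pass to the reals
  have hL1 : 1 ≤ L := by
    by_contra hc
    have hz : L = 0 := by omega
    rw [hz] at hRbound
    omega
  have hLposR : (0 : ℝ) < (L : ℝ) := by exact_mod_cast hL1
  have hMgt : (L : ℝ) * ((s.choose r : ℝ) * β) < (⌊thr⌋₊ : ℝ) + 1 := by
    have h1 : (L : ℝ) ≤ ℓ := by
      rw [hL]
      exact Nat.floor_le hℓ
    have h2 : thr < (⌊thr⌋₊ : ℝ) + 1 := Nat.lt_floor_add_one thr
    rw [hCβ]
    have h3 : (L : ℝ) * ((s.choose r : ℝ) + δ) ≤ ℓ * ((s.choose r : ℝ) + δ) := by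
      apply mul_le_mul_of_nonneg_right h1
      positivity
    rw [hthr] at h2
    linarith
  have hwu : (s.choose r : ℝ) * β < ((W \ Pj u).card : ℝ) := by
    have h1 : ((⌊thr⌋₊ : ℝ) + 1) ≤ (L : ℝ) * ((W \ Pj u).card : ℝ) := by
      exact_mod_cast hRbound
    have h2 : (L : ℝ) * ((s.choose r : ℝ) * β) < (L : ℝ) * ((W \ Pj u).card : ℝ) :=
      lt_of_lt_of_le hMgt h1
    exact lt_of_mul_lt_mul_left (by linarith) (le_of_lt hLposR)
  have hwu1 : 1 ≤ (W \ Pj u).card := by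
    by_contra hc
    have hz : (W \ Pj u).card = 0 := by omega
    rw [hz] at hRbound
    omega
  have hstep : ∀ j : ℕ, 1 ≤ (W \ Pj (j + 1)).card →
      β * ((W \ Pj (j + 1)).card : ℝ) ≤ ((W \ Pj j).card : ℝ) := by
    intro j hw1
    have h1 : (((W \ Pj (j + 1)).card : ℝ)) * ((⌊thr⌋₊ : ℝ) + 1)
        ≤ (s.choose r : ℝ) * ((L : ℝ) * ((W \ Pj j).card : ℝ)) := by
      exact_mod_cast hBj j
    have hwpos : (0 : ℝ) < ((W \ Pj (j + 1)).card : ℝ) := by exact_mod_cast hw1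
    have h2 : ((W \ Pj (j + 1)).card : ℝ) * ((L : ℝ) * ((s.choose r : ℝ) * β))
        < ((W \ Pj (j + 1)).card : ℝ) * ((⌊thr⌋₊ : ℝ) + 1) :=
      (mul_lt_mul_iff_right₀ hwpos).mpr hMgt
    have h3 := h2.trans_le h1
    have hCL : (0 : ℝ) < (s.choose r : ℝ) * (L : ℝ) := mul_pos hCpos hLposR
    nlinarith
  -- chain the geometric decay
  have hchain : ∀ i : ℕ, ∀ j : ℕ, j + i ≤ u →
      β ^ i * (((W \ Pj (j + i)).card) : ℝ) ≤ (((W \ Pj j).card) : ℝ) := by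
    intro i
    induction i with
    | zero => intro j _; simp
    | succ i ih =>
      intro j hji
      have hw1 : 1 ≤ (W \ Pj (j + i + 1)).card := le_trans hwu1 (hwmono (by omega))
      have h1 := hstep (j + i) hw1
      have h2 := ih j (by omega)
      have h3 : β ^ (i + 1) * (((W \ Pj (j + (i + 1))).card) : ℝ)
          = β ^ i * (β * (((W \ Pj (j + i + 1)).card) : ℝ)) := by
        rw [show j + (i + 1) = j + i + 1 from rfl]
        ring
      rw [h3]
      calc β ^ i * (β * (((W \ Pj (j + i + 1)).card) : ℝ))
          ≤ β ^ i * (((W \ Pj (j + i)).card) : ℝ) :=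
            mul_le_mul_of_nonneg_left h1 (pow_nonneg (le_of_lt hβ0) i)
        _ ≤ (((W \ Pj j).card) : ℝ) := h2
  have hfinal : β ^ u * (((W \ Pj u).card) : ℝ) ≤ (((W \ Pj 0).card) : ℝ) := by
    have h := hchain u 0 (by omega)
    rw [Nat.zero_add] at h
    exact h
  have hw0 : (((W \ Pj 0).card) : ℝ) ≤ (K.card : ℝ) := by
    have hsb : W \ Pj 0 ⊆ K := fun x hx => hWK (Finset.mem_sdiff.mp hx).1
    exact_mod_cast Finset.card_le_card hsb
  have hβu : (0 : ℝ) < β ^ u := pow_pos hβ0 u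
  have hCge1 : (1 : ℝ) ≤ (s.choose r : ℝ) := by
    exact_mod_cast Nat.one_le_iff_ne_zero.mpr (Nat.choose_pos hrs.le).ne'
  have hlast : β ^ (u + 1) ≤ β ^ u * (((W \ Pj u).card) : ℝ) := by
    rw [pow_succ]
    have h1 : β ≤ (s.choose r : ℝ) * β := by nlinarith
    have h2 : β ≤ (((W \ Pj u).card) : ℝ) := le_of_lt (lt_of_le_of_lt h1 hwu)
    nlinarith
  have hcontra : ((K.card) : ℝ) < ((K.card) : ℝ) := by
    calc ((K.card) : ℝ) < β ^ (u + 1) := ht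
      _ ≤ β ^ u * (((W \ Pj u).card) : ℝ) := hlast
      _ ≤ (((W \ Pj 0).card) : ℝ) := hfinal
      _ ≤ ((K.card) : ℝ) := hw0
  exact absurd hcontra (lt_irrefl _)
end

section
/- Let τ ≥ 0 be a real number and let R_1, …, R_m be a sequence of distinct r-cliques of G such that for every j, the residual s-clique-degree of R_j with respect to {R_1, …, R_{j-1}} is at most τ. Then every R_j in the sequence has (r,s)-clique core number at most τ; that is, any sequence of peels each performed at residual s-clique-degree at most τ only peels r-cliques with true core number at most τ. -/
open Finset

variable {V : Type*}

/-- Let `τ ≥ 0` and let `R_1, …, R_m` be a sequence of distinct `r`-cliques of `G` such that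
each `R_j` has residual `s`-clique-degree at most `τ` with respect to the previously peeled
cliques `{R_1, …, R_{j-1}}`. Then every `R_j` has `(r,s)`-clique core number at most `τ`. -/
theorem stmt11 [Fintype V] [DecidableEq V] (G : SimpleGraph V) [DecidableRel G.Adj]
    (r s : ℕ) (hr : 1 ≤ r) (hrs : r < s)
    (τ : ℝ) (hτ : 0 ≤ τ)
    (m : ℕ) (Rseq : Fin m → Finset V)
    (hinj : Function.Injective Rseq)
    (hclique : ∀ j : Fin m, Rseq j ∈ G.cliqueFinset r)
    (hdeg : ∀ j : Fin m, (residualDeg G s (peeledBefore Rseq j) (Rseq j) : ℝ) ≤ τ) :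
    ∀ j : Fin m, (coreNumber G r s (Rseq j) : ℝ) ≤ τ := by
  classical
  intro j
  -- Key claim: every element of the defining set is ≤ τ (as a real).
  have key : ∀ c ∈ {c : ℕ | 1 ≤ c ∧ ∃ 𝒮 : Finset (Finset V),
      (∀ S ∈ 𝒮, S ∈ G.cliqueFinset s) ∧ (∃ S ∈ 𝒮, Rseq j ⊆ S) ∧
      ∀ R' ∈ G.cliqueFinset r, (∃ S ∈ 𝒮, R' ⊆ S) →
        c ≤ (𝒮.filter (fun S => R' ⊆ S)).card}, (c : ℝ) ≤ τ := by
    rintro c ⟨hc1, 𝒮, h𝒮, ⟨S0, hS0, hRS0⟩, hmin⟩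
    set J : Finset (Fin m) := Finset.univ.filter (fun i => ∃ S ∈ 𝒮, Rseq i ⊆ S) with hJ
    have hjJ : j ∈ J := by
      simp only [hJ, Finset.mem_filter, Finset.mem_univ, true_and]
      exact ⟨S0, hS0, hRS0⟩
    have hJne : J.Nonempty := ⟨j, hjJ⟩
    set i := J.min' hJne with hi
    have hiJ : i ∈ J := J.min'_mem hJne
    simp only [hJ, Finset.mem_filter, Finset.mem_univ, true_and] at hiJ
    have hcle : c ≤ (𝒮.filter (fun S => Rseq i ⊆ S)).card :=
      hmin (Rseq i) (hclique i) hiJ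
    have hsub : 𝒮.filter (fun S => Rseq i ⊆ S) ⊆
        (G.cliqueFinset s).filter
          (fun S => Rseq i ⊆ S ∧ ∀ Q ∈ peeledBefore Rseq i, ¬ Q ⊆ S) := by
      intro S hS
      rw [Finset.mem_filter] at hS
      obtain ⟨hS𝒮, hiS⟩ := hS
      rw [Finset.mem_filter]
      refine ⟨h𝒮 S hS𝒮, hiS, ?_⟩
      intro Q hQ hQS
      rw [peeledBefore, Finset.mem_image] at hQ
      obtain ⟨k, hk, rfl⟩ := hQ
      rw [Finset.mem_Iio] at hk
      have hkJ : k ∈ J := by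
        simp only [hJ, Finset.mem_filter, Finset.mem_univ, true_and]
        exact ⟨S, hS𝒮, hQS⟩
      exact absurd (J.min'_le k hkJ) (not_le.mpr hk)
    have hcle2 : c ≤ residualDeg G s (peeledBefore Rseq i) (Rseq i) :=
      hcle.trans (Finset.card_le_card hsub)
    calc (c : ℝ) ≤ (residualDeg G s (peeledBefore Rseq i) (Rseq i) : ℝ) := by
            exact_mod_cast hcle2
      _ ≤ τ := hdeg i
  rw [coreNumber]
  rcases Set.eq_empty_or_nonempty {c : ℕ | 1 ≤ c ∧ ∃ 𝒮 : Finset (Finset V),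
      (∀ S ∈ 𝒮, S ∈ G.cliqueFinset s) ∧ (∃ S ∈ 𝒮, Rseq j ⊆ S) ∧
      ∀ R' ∈ G.cliqueFinset r, (∃ S ∈ 𝒮, R' ⊆ S) →
        c ≤ (𝒮.filter (fun S => R' ⊆ S)).card} with he | hne
  · rw [he, csSup_empty]
    simpa using hτ
  · have hbdd : ∀ c ∈ {c : ℕ | 1 ≤ c ∧ ∃ 𝒮 : Finset (Finset V),
        (∀ S ∈ 𝒮, S ∈ G.cliqueFinset s) ∧ (∃ S ∈ 𝒮, Rseq j ⊆ S) ∧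
        ∀ R' ∈ G.cliqueFinset r, (∃ S ∈ 𝒮, R' ⊆ S) →
          c ≤ (𝒮.filter (fun S => R' ⊆ S)).card}, c ≤ Nat.floor τ := by
      intro c hc
      exact (Nat.le_floor_iff hτ).mpr (key c hc)
    have hsup : sSup {c : ℕ | 1 ≤ c ∧ ∃ 𝒮 : Finset (Finset V),
        (∀ S ∈ 𝒮, S ∈ G.cliqueFinset s) ∧ (∃ S ∈ 𝒮, Rseq j ⊆ S) ∧
        ∀ R' ∈ G.cliqueFinset r, (∃ S ∈ 𝒮, R' ⊆ S) →
          c ≤ (𝒮.filter (fun S => R' ⊆ S)).card} ≤ Nat.floor τ :=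
      csSup_le hne hbdd
    calc (_ : ℝ) ≤ (Nat.floor τ : ℝ) := by exact_mod_cast hsup
      _ ≤ τ := Nat.floor_le hτ
end
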